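/- arXiv:2403.18552 — 9 statements merged into one kernel-verified Lean document; each statement's English description precedes it below -/
import Mathlib

section
/- Let N ≥ 1, h > 0, λ1 > 0, let k^b be a real constant and L^b_x, L^b_y, L^b_z, L^σ_x, L^σ_y nonnegative constants, and set K1 := 2k^b + λ1 + L^σ_x + L^b_x h, K2 := (λ1^{-1} + h)L^b_y + L^σ_y, C1 := L^b_z(h + λ1^{-1}); assume 1 + K1·h ≥ 0. Let (𝓕_i)_{i=0}^{N} be a filtration on (Ω, 𝓕, ℙ) and let W_0, …, W_{N−1} be ℝ^m-valued random vectors such that each W_i is 𝓕_{i+1}-measurable, independent of 𝓕_i, with 𝔼[W_i] = 0 and 𝔼[W_i W_iᵀ] = h I_m. For each 0 ≤ i ≤ N−1 let b_i : ℝ^d × ℝ^q × ℝ^{q×m} → ℝ^d satisfy (b_i(x1,y,z) − b_i(x2,y,z))ᵀ(x1 − x2) ≤ k^b‖x1 − x2‖² and ‖b_i(x1,y1,z1) − b_i(x2,y2,z2)‖² ≤ L^b_x‖x1−x2‖² + L^b_y‖y1−y2‖² + L^b_z‖z1−z2‖², and let σ_i : ℝ^d × ℝ^q → ℝ^{d×m}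 satisfy ‖σ_i(x1,y1) − σ_i(x2,y2)‖² ≤ L^σ_x‖x1−x2‖² + L^σ_y‖y1−y2‖². For j = 1,2 let X^j_i (ℝ^d-valued), Y^j_i (ℝ^q-valued), Z^j_i (ℝ^{q×m}-valued) be 𝓕_i-measurable square-integrable random variables with X^1_0 = X^2_0 and X^j_{i+1} = X^j_i + h·b_i(X^j_i, Y^j_i, Z^j_i) + σ_i(X^j_i, Y^j_i)W_i for 0 ≤ i ≤ N−1. Writing δX_i := X^1_i − X^2_i, δY_i := Y^1_i − Y^2_i, δZ_i := Z^1_i − Z^2_i, it holds for every 0 ≤ n ≤ N that 𝔼[‖δX_n‖²] ≤ K2·h·Σ_{i=0}^{n−1} e^{K1(n−i−1)h}·𝔼[‖δY_i‖²] + C1·h·Σ_{i=0}^{n−1} e^{K1(n−i−1)h}·𝔼[‖δZ_i‖²]. -/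
open MeasureTheory ProbabilityTheory
open scoped RealInnerProductSpace

instance matrixMeasurableSpace (n m : ℕ) : MeasurableSpace (Matrix (Fin n) (Fin m) ℝ) :=
  inferInstanceAs (MeasurableSpace (Fin n → Fin m → ℝ))

attribute [local instance] Matrix.frobeniusSeminormedAddCommGroup
  Matrix.frobeniusNormedAddCommGroup

instance matrixBorel (n m : ℕ) : BorelSpace (Matrix (Fin n) (Fin m) ℝ) := by
  constructor
  have h1 : borel (Matrix (Fin n) (Fin m) ℝ) = borel (Fin n → Fin m → ℝ) := rfl
  rw [h1]
  exact BorelSpace.measurable_eq (α := Fin n → Fin m → ℝ)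

instance matrixSC (n m : ℕ) : SecondCountableTopology (Matrix (Fin n) (Fin m) ℝ) :=
  inferInstanceAs (SecondCountableTopology (Fin n → Fin m → ℝ))

lemma l2_mul_integrable {Ω : Type*} [MeasurableSpace Ω] {μ : Measure Ω} {f g : Ω → ℝ}
    (hf : MemLp f 2 μ) (hg : MemLp g 2 μ) : Integrable (fun ω => f ω * g ω) μ := by
  have h112 : (1 : ENNReal) / 1 = 1 / 2 + 1 / 2 := by
    rw [ENNReal.div_add_div_same]
    norm_num
    rw [eq_comm, ENNReal.div_eq_one_iff] <;> norm_num
  have H := hg.smul (r := 1) hf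
  exact (memLp_one_iff_integrable.mp H).congr
    (Filter.Eventually.of_forall fun ω => by simp [mul_comm])

lemma euclid_abs_le_norm {k : ℕ} (x : EuclideanSpace ℝ (Fin k)) (a : Fin k) : |x a| ≤ ‖x‖ := by
  have h1 : |x a| ^ 2 ≤ ∑ i, ‖x i‖ ^ 2 := by
    simpa [sq_abs] using
      Finset.single_le_sum (f := fun i => ‖x i‖ ^ 2) (fun i _ => sq_nonneg _) (Finset.mem_univ a)
  calc |x a| = Real.sqrt (|x a| ^ 2) := by rw [Real.sqrt_sq (abs_nonneg _)]
    _ ≤ Real.sqrt (∑ i, ‖x i‖ ^ 2) := Real.sqrt_le_sqrt h1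
    _ = ‖x‖ := (EuclideanSpace.norm_eq x).symm

lemma frob_sq {n m : ℕ} (A : Matrix (Fin n) (Fin m) ℝ) : ‖A‖ ^ 2 = ∑ i, ∑ j, (A i j) ^ 2 := by
  have h : ‖A‖ = Real.sqrt (∑ i, ∑ j, (A i j) ^ 2) := by
    rw [Matrix.frobenius_norm_def, Real.sqrt_eq_rpow]
    congr 1
    refine Finset.sum_congr rfl fun i _ => Finset.sum_congr rfl fun j _ => ?_
    rw [Real.rpow_two, Real.norm_eq_abs, sq_abs]
  rw [h, Real.sq_sqrt]
  positivity

lemma frob_abs_entry_le {n m : ℕ} (A : Matrix (Fin n) (Fin m) ℝ) (a : Fin n) (c : Fin m) :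
    |A a c| ≤ ‖A‖ := by
  have h1 : |A a c| ^ 2 ≤ ∑ i, ∑ j, (A i j) ^ 2 := by
    have h2 : (A a c) ^ 2 ≤ ∑ j, (A a j) ^ 2 :=
      Finset.single_le_sum (f := fun j => (A a j) ^ 2) (fun j _ => sq_nonneg _) (Finset.mem_univ c)
    have h3 : ∑ j, (A a j) ^ 2 ≤ ∑ i, ∑ j, (A i j) ^ 2 :=
      Finset.single_le_sum (f := fun i => ∑ j, (A i j) ^ 2)
        (fun i _ => Finset.sum_nonneg fun j _ => sq_nonneg _) (Finset.mem_univ a)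
    calc |A a c| ^ 2 = (A a c) ^ 2 := sq_abs _
      _ ≤ _ := h2.trans h3
  have h4 : (0:ℝ) ≤ ‖A‖ := norm_nonneg _
  have h5 := frob_sq A
  nlinarith [abs_nonneg (A a c)]

lemma cont_of_sq_lip3 {E F G H : Type*} [NormedAddCommGroup E] [NormedAddCommGroup F]
    [NormedAddCommGroup G] [NormedAddCommGroup H] {f : E → F → G → H} {c1 c2 c3 : ℝ}
    (h1 : 0 ≤ c1) (h2 : 0 ≤ c2) (h3 : 0 ≤ c3)
    (hf : ∀ x1 x2 y1 y2 z1 z2, ‖f x1 y1 z1 - f x2 y2 z2‖ ^ 2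
      ≤ c1 * ‖x1 - x2‖ ^ 2 + c2 * ‖y1 - y2‖ ^ 2 + c3 * ‖z1 - z2‖ ^ 2) :
    Continuous fun p : E × F × G => f p.1 p.2.1 p.2.2 := by
  have hlip : LipschitzWith (Real.toNNReal (Real.sqrt (c1 + c2 + c3)))
      (fun p : E × F × G => f p.1 p.2.1 p.2.2) := by
    apply LipschitzWith.of_dist_le_mul
    intro p q
    have e1 : dist p.1 q.1 ≤ dist p q := le_max_left _ _
    have e2 : dist p.2.1 q.2.1 ≤ dist p q := le_trans (le_max_left _ _) (le_max_right _ _)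
    have e3 : dist p.2.2 q.2.2 ≤ dist p q := le_trans (le_max_right _ _) (le_max_right _ _)
    have hd : (0:ℝ) ≤ dist p q := dist_nonneg
    have key : dist (f p.1 p.2.1 p.2.2) (f q.1 q.2.1 q.2.2) ^ 2
        ≤ (c1 + c2 + c3) * dist p q ^ 2 := by
      rw [dist_eq_norm]
      calc ‖f p.1 p.2.1 p.2.2 - f q.1 q.2.1 q.2.2‖ ^ 2
          ≤ c1 * ‖p.1 - q.1‖ ^ 2 + c2 * ‖p.2.1 - q.2.1‖ ^ 2 + c3 * ‖p.2.2 - q.2.2‖ ^ 2 :=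
            hf _ _ _ _ _ _
        _ ≤ c1 * dist p q ^ 2 + c2 * dist p q ^ 2 + c3 * dist p q ^ 2 := by
            have f1 : ‖p.1 - q.1‖ ^ 2 ≤ dist p q ^ 2 := by
              rw [← dist_eq_norm]; exact pow_le_pow_left₀ dist_nonneg e1 2
            have f2 : ‖p.2.1 - q.2.1‖ ^ 2 ≤ dist p q ^ 2 := by
              rw [← dist_eq_norm]; exact pow_le_pow_left₀ dist_nonneg e2 2
            have f3 : ‖p.2.2 - q.2.2‖ ^ 2 ≤ dist p q ^ 2 := by
              rw [← dist_eq_norm]; exact pow_le_pow_left₀ dist_nonneg e3 2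
            have := mul_le_mul_of_nonneg_left f1 h1
            have := mul_le_mul_of_nonneg_left f2 h2
            have := mul_le_mul_of_nonneg_left f3 h3
            linarith
        _ = (c1 + c2 + c3) * dist p q ^ 2 := by ring
    calc dist (f p.1 p.2.1 p.2.2) (f q.1 q.2.1 q.2.2)
        = Real.sqrt (dist (f p.1 p.2.1 p.2.2) (f q.1 q.2.1 q.2.2) ^ 2) := by
          rw [Real.sqrt_sq dist_nonneg]
      _ ≤ Real.sqrt ((c1 + c2 + c3) * dist p q ^ 2) := Real.sqrt_le_sqrt key
      _ = Real.sqrt (c1 + c2 + c3) * dist p q := by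
          rw [Real.sqrt_mul (by positivity), Real.sqrt_sq hd]
      _ = (Real.toNNReal (Real.sqrt (c1 + c2 + c3)) : ℝ) * dist p q := by
          rw [Real.coe_toNNReal _ (Real.sqrt_nonneg _)]
  exact hlip.continuous

lemma cont_of_sq_lip2 {E F H : Type*} [NormedAddCommGroup E] [NormedAddCommGroup F]
    [NormedAddCommGroup H] {f : E → F → H} {c1 c2 : ℝ}
    (h1 : 0 ≤ c1) (h2 : 0 ≤ c2)
    (hf : ∀ x1 x2 y1 y2, ‖f x1 y1 - f x2 y2‖ ^ 2 ≤ c1 * ‖x1 - x2‖ ^ 2 + c2 * ‖y1 - y2‖ ^ 2) :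
    Continuous fun p : E × F => f p.1 p.2 := by
  have := cont_of_sq_lip3 (f := fun (x : E) (y : F) (_ : ℝ) => f x y) h1 h2 le_rfl
    (fun x1 x2 y1 y2 z1 z2 => by
      have := hf x1 x2 y1 y2; nlinarith [sq_nonneg ‖z1 - z2‖, hf x1 x2 y1 y2])
  exact this.comp (by continuity : Continuous fun p : E × F => (p.1, p.2, (0:ℝ)))

set_option maxHeartbeats 2000000 in
lemma one_step
    {Ω : Type*} [mΩ : MeasurableSpace Ω] (μ : Measure Ω) [IsProbabilityMeasure μ]
    (d q m : ℕ) (h lam1 : ℝ) (hh : 0 < h) (hlam1 : 0 < lam1)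
    (kb Lbx Lby Lbz Lsx Lsy : ℝ)
    (hLbx : 0 ≤ Lbx) (hLby : 0 ≤ Lby) (hLbz : 0 ≤ Lbz) (hLsx : 0 ≤ Lsx) (hLsy : 0 ≤ Lsy)
    (ℱ : Filtration ℕ mΩ) (i : ℕ)
    (W : Ω → EuclideanSpace ℝ (Fin m))
    (hWindep : Indep (MeasurableSpace.comap W inferInstance) (ℱ i) μ)
    (hWL2 : MemLp W 2 μ)
    (hWmean : ∫ ω, W ω ∂μ = 0)
    (hWcov : ∀ a c : Fin m, ∫ ω, W ω a * W ω c ∂μ = if a = c then h else 0)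
    (b : EuclideanSpace ℝ (Fin d) → EuclideanSpace ℝ (Fin q) → Matrix (Fin q) (Fin m) ℝ →
      EuclideanSpace ℝ (Fin d))
    (σ : EuclideanSpace ℝ (Fin d) → EuclideanSpace ℝ (Fin q) → Matrix (Fin d) (Fin m) ℝ)
    (hbmono : ∀ x1 x2 y z, ⟪b x1 y z - b x2 y z, x1 - x2⟫ ≤ kb * ‖x1 - x2‖ ^ 2)
    (hbLip : ∀ x1 x2 y1 y2 z1 z2, ‖b x1 y1 z1 - b x2 y2 z2‖ ^ 2
      ≤ Lbx * ‖x1 - x2‖ ^ 2 + Lby * ‖y1 - y2‖ ^ 2 + Lbz * ‖z1 - z2‖ ^ 2)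
    (hσLip : ∀ x1 x2 y1 y2, ‖σ x1 y1 - σ x2 y2‖ ^ 2 ≤ Lsx * ‖x1 - x2‖ ^ 2 + Lsy * ‖y1 - y2‖ ^ 2)
    (X0 X1 : Ω → EuclideanSpace ℝ (Fin d)) (Y0 Y1 : Ω → EuclideanSpace ℝ (Fin q))
    (Z0 Z1 : Ω → Matrix (Fin q) (Fin m) ℝ)
    (hX0m : Measurable[ℱ i] X0) (hX1m : Measurable[ℱ i] X1)
    (hY0m : Measurable[ℱ i] Y0) (hY1m : Measurable[ℱ i] Y1)
    (hZ0m : Measurable[ℱ i] Z0) (hZ1m : Measurable[ℱ i] Z1)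
    (hX0L : MemLp X0 2 μ) (hX1L : MemLp X1 2 μ) (hY0L : MemLp Y0 2 μ) (hY1L : MemLp Y1 2 μ)
    (hZ0L : MemLp Z0 2 μ) (hZ1L : MemLp Z1 2 μ) :
    ∫ ω, ‖(X0 ω + h • b (X0 ω) (Y0 ω) (Z0 ω)
          + (EuclideanSpace.equiv (Fin d) ℝ).symm (Matrix.mulVec (σ (X0 ω) (Y0 ω)) (W ω)))
        - (X1 ω + h • b (X1 ω) (Y1 ω) (Z1 ω)
          + (EuclideanSpace.equiv (Fin d) ℝ).symm (Matrix.mulVec (σ (X1 ω) (Y1 ω)) (W ω)))‖ ^ 2 ∂μ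
      ≤ (1 + (2 * kb + lam1 + Lsx + Lbx * h) * h) * ∫ ω, ‖X0 ω - X1 ω‖ ^ 2 ∂μ
        + ((lam1⁻¹ + h) * Lby + Lsy) * h * ∫ ω, ‖Y0 ω - Y1 ω‖ ^ 2 ∂μ
        + Lbz * (h + lam1⁻¹) * h * ∫ ω, ‖Z0 ω - Z1 ω‖ ^ 2 ∂μ := by
  -- abbreviations
  set ξ : Ω → EuclideanSpace ℝ (Fin d) := fun ω => X0 ω - X1 ω with hξdef
  set dY : Ω → EuclideanSpace ℝ (Fin q) := fun ω => Y0 ω - Y1 ω with hdYdef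
  set dZ : Ω → Matrix (Fin q) (Fin m) ℝ := fun ω => Z0 ω - Z1 ω with hdZdef
  set db : Ω → EuclideanSpace ℝ (Fin d) :=
    fun ω => b (X0 ω) (Y0 ω) (Z0 ω) - b (X1 ω) (Y1 ω) (Z1 ω) with hdbdef
  set A : Ω → Matrix (Fin d) (Fin m) ℝ :=
    fun ω => σ (X0 ω) (Y0 ω) - σ (X1 ω) (Y1 ω) with hAdef
  set ξ' : Ω → EuclideanSpace ℝ (Fin d) := fun ω => ξ ω + h • db ω with hξ'def
  set M : Ω → EuclideanSpace ℝ (Fin d) :=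
    fun ω => (EuclideanSpace.equiv (Fin d) ℝ).symm (Matrix.mulVec (A ω) (W ω)) with hMdef
  -- continuity
  have hbC : Continuous fun p : (EuclideanSpace ℝ (Fin d)) × (EuclideanSpace ℝ (Fin q)) ×
      (Matrix (Fin q) (Fin m) ℝ) => b p.1 p.2.1 p.2.2 :=
    cont_of_sq_lip3 hLbx hLby hLbz hbLip
  have hσC : Continuous fun p : (EuclideanSpace ℝ (Fin d)) × (EuclideanSpace ℝ (Fin q)) =>
      σ p.1 p.2 := cont_of_sq_lip2 hLsx hLsy hσLip
  -- measurability w.r.t. F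
  have hb0F : Measurable[ℱ i] fun ω => b (X0 ω) (Y0 ω) (Z0 ω) :=
    hbC.measurable.comp (hX0m.prodMk (hY0m.prodMk hZ0m))
  have hb1F : Measurable[ℱ i] fun ω => b (X1 ω) (Y1 ω) (Z1 ω) :=
    hbC.measurable.comp (hX1m.prodMk (hY1m.prodMk hZ1m))
  have hs0F : Measurable[ℱ i] fun ω => σ (X0 ω) (Y0 ω) :=
    hσC.measurable.comp (hX0m.prodMk hY0m)
  have hs1F : Measurable[ℱ i] fun ω => σ (X1 ω) (Y1 ω) :=
    hσC.measurable.comp (hX1m.prodMk hY1m)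
  have hdbF : Measurable[ℱ i] db := hb0F.sub hb1F
  have hAF : Measurable[ℱ i] A := hs0F.sub hs1F
  have hξF : Measurable[ℱ i] ξ := hX0m.sub hX1m
  have hξ'F : Measurable[ℱ i] ξ' := hξF.add (hdbF.const_smul h)
  -- ambient measurability
  have hdbm : Measurable db := hdbF.mono (ℱ.le i) le_rfl
  have hAm : Measurable A := hAF.mono (ℱ.le i) le_rfl
  have hξm : Measurable ξ := hξF.mono (ℱ.le i) le_rfl
  have hξ'm : Measurable ξ' := hξ'F.mono (ℱ.le i) le_rfl
  -- L² facts
  have hξL : MemLp ξ 2 μ := hX0L.sub hX1L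
  have hdYL : MemLp dY 2 μ := hY0L.sub hY1L
  have hdZL : MemLp dZ 2 μ := hZ0L.sub hZ1L
  have hξsq : Integrable (fun ω => ‖ξ ω‖ ^ 2) μ :=
    (memLp_two_iff_integrable_sq_norm hξL.1).mp hξL
  have hdYsq : Integrable (fun ω => ‖dY ω‖ ^ 2) μ :=
    (memLp_two_iff_integrable_sq_norm hdYL.1).mp hdYL
  have hdZsq : Integrable (fun ω => ‖dZ ω‖ ^ 2) μ :=
    (memLp_two_iff_integrable_sq_norm hdZL.1).mp hdZL
  have hdbL : MemLp db 2 μ := by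
    refine (memLp_two_iff_integrable_sq_norm hdbm.aestronglyMeasurable).mpr ?_
    refine Integrable.mono'
      (g := fun ω => Lbx * ‖ξ ω‖ ^ 2 + Lby * ‖dY ω‖ ^ 2 + Lbz * ‖dZ ω‖ ^ 2)
      (((hξsq.const_mul Lbx).add (hdYsq.const_mul Lby)).add (hdZsq.const_mul Lbz))
      ((hdbm.norm.pow_const 2).aestronglyMeasurable) ?_
    refine Filter.Eventually.of_forall fun ω => ?_
    rw [Real.norm_of_nonneg (by positivity)]
    exact hbLip _ _ _ _ _ _
  have hAL : MemLp A 2 μ := by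
    refine (memLp_two_iff_integrable_sq_norm hAm.aestronglyMeasurable).mpr ?_
    refine Integrable.mono'
      (g := fun ω => Lsx * ‖ξ ω‖ ^ 2 + Lsy * ‖dY ω‖ ^ 2)
      ((hξsq.const_mul Lsx).add (hdYsq.const_mul Lsy))
      ((continuous_norm.pow 2).comp_aestronglyMeasurable hAm.aestronglyMeasurable) ?_
    refine Filter.Eventually.of_forall fun ω => ?_
    rw [Real.norm_of_nonneg (by positivity)]
    exact hσLip _ _ _ _
  have hξ'L : MemLp ξ' 2 μ := hξL.add (hdbL.const_smul h)
  have hξ'sq : Integrable (fun ω => ‖ξ' ω‖ ^ 2) μ :=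
    (memLp_two_iff_integrable_sq_norm hξ'L.1).mp hξ'L
  have hAsq : Integrable (fun ω => ‖A ω‖ ^ 2) μ :=
    (memLp_two_iff_integrable_sq_norm hAL.1).mp hAL
  -- components
  have hξ'a : ∀ a : Fin d, MemLp (fun ω => ξ' ω a) 2 μ :=
    fun a => (EuclideanSpace.proj (𝕜 := ℝ) a).comp_memLp' hξ'L
  have hAac : ∀ (a : Fin d) (c : Fin m), MemLp (fun ω => A ω a c) 2 μ := by
    intro a c
    refine MemLp.of_le hAL
      ((((continuous_apply c).comp (continuous_apply (A := fun _ : Fin d => Fin m → ℝ) a)).measurable.comp hAm).aestronglyMeasurable) ?_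
    refine Filter.Eventually.of_forall fun ω => ?_
    rw [Real.norm_eq_abs]
    exact frob_abs_entry_le (A ω) a c
  have hWc2 : ∀ c : Fin m, MemLp (fun ω => W ω c) 2 μ :=
    fun c => (EuclideanSpace.proj (𝕜 := ℝ) c).comp_memLp' hWL2
  have hWcint : ∀ c : Fin m, Integrable (fun ω => W ω c) μ :=
    fun c => (hWc2 c).integrable one_le_two
  -- independence machinery
  have hWcm : Measurable[MeasurableSpace.comap W inferInstance] W :=
    Measurable.of_comap_le le_rfl
  have hIndep : ∀ (f : Ω → ℝ), Measurable[ℱ i] f → ∀ (g : Ω → ℝ),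
      Measurable[MeasurableSpace.comap W inferInstance] g → IndepFun f g μ := by
    intro f hf g hg
    rw [IndepFun_iff_Indep]
    exact indep_of_indep_of_le_right (indep_of_indep_of_le_left hWindep.symm hf.comap_le)
      hg.comap_le
  have hevalW : ∀ c : Fin m, Measurable[MeasurableSpace.comap W inferInstance]
      fun ω => W ω c :=
    fun c => ((EuclideanSpace.proj (𝕜 := ℝ) c).continuous.measurable).comp hWcm
  have hξ'aF : ∀ a : Fin d, Measurable[ℱ i] fun ω => ξ' ω a :=
    fun a => ((EuclideanSpace.proj (𝕜 := ℝ) a).continuous.measurable).comp hξ'F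
  have hevalM : ∀ (a : Fin d) (c : Fin m),
      Continuous (fun Mx : Matrix (Fin d) (Fin m) ℝ => Mx a c) :=
    fun a c => (continuous_apply c).comp (continuous_apply a)
  have hAacF : ∀ (a : Fin d) (c : Fin m), Measurable[ℱ i] fun ω => A ω a c :=
    fun a c => ((hevalM a c).measurable).comp hAF
  have cross : ∀ (a : Fin d) (c : Fin m),
      IndepFun (fun ω => ξ' ω a * A ω a c) (fun ω => W ω c) μ :=
    fun a c => hIndep _ ((hξ'aF a).mul (hAacF a c)) _ (hevalW c)
  have covind : ∀ (a : Fin d) (c c' : Fin m),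
      IndepFun (fun ω => A ω a c * A ω a c') (fun ω => W ω c * W ω c') μ :=
    fun a c c' => hIndep _ ((hAacF a c).mul (hAacF a c')) _ ((hevalW c).mul (hevalW c'))
  -- mean of components
  have hWmean_c : ∀ c : Fin m, ∫ ω, W ω c ∂μ = 0 := by
    intro c
    have h1 := (EuclideanSpace.proj (𝕜 := ℝ) c).integral_comp_comm (hWL2.integrable one_le_two)
    rw [hWmean] at h1
    simpa using h1
  -- cross term integrability and vanishing
  have hcross_int : ∀ (a : Fin d) (c : Fin m),
      Integrable (fun ω => ξ' ω a * A ω a c * W ω c) μ := by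
    intro a c
    have := (cross a c).integrable_mul (l2_mul_integrable (hξ'a a) (hAac a c)) (hWcint c)
    exact this
  have hinner_eq : (fun ω => ⟪ξ' ω, M ω⟫)
      = fun ω => ∑ a, ∑ c, ξ' ω a * A ω a c * W ω c := by
    funext ω
    simp only [hMdef]
    simp [PiLp.inner_apply, RCLike.inner_apply, conj_trivial, Matrix.mulVec, dotProduct,
      Finset.mul_sum, mul_assoc]
    exact Finset.sum_congr rfl fun a _ => by
      rw [Finset.sum_mul]; exact Finset.sum_congr rfl fun c _ => by ring
  have hinner_int : Integrable (fun ω => ⟪ξ' ω, M ω⟫) μ := by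
    rw [hinner_eq]
    exact integrable_finset_sum _ fun a _ => integrable_finset_sum _ fun c _ => hcross_int a c
  have hcross_zero : ∫ ω, ⟪ξ' ω, M ω⟫ ∂μ = 0 := by
    rw [hinner_eq,
      integral_finset_sum _ fun a _ => integrable_finset_sum _ fun c _ => hcross_int a c]
    refine Finset.sum_eq_zero fun a _ => ?_
    rw [integral_finset_sum _ fun c _ => hcross_int a c]
    refine Finset.sum_eq_zero fun c _ => ?_
    have := (cross a c).integral_fun_mul_eq_mul_integral
      (l2_mul_integrable (hξ'a a) (hAac a c)).aestronglyMeasurable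
      (hWcint c).aestronglyMeasurable
    rw [hWmean_c c, mul_zero] at this
    simpa [Pi.mul_apply] using this
  -- second moment of the martingale part
  have hMterm_int : ∀ (a : Fin d) (c c' : Fin m),
      Integrable (fun ω => A ω a c * A ω a c' * (W ω c * W ω c')) μ := by
    intro a c c'
    have := (covind a c c').integrable_mul (l2_mul_integrable (hAac a c) (hAac a c'))
      (l2_mul_integrable (hWc2 c) (hWc2 c'))
    exact this
  have hMsq_eq : (fun ω => ‖M ω‖ ^ 2)
      = fun ω => ∑ a, ∑ c, ∑ c', A ω a c * A ω a c' * (W ω c * W ω c') := by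
    funext ω
    rw [← real_inner_self_eq_norm_sq]
    simp only [hMdef]
    simp [PiLp.inner_apply, RCLike.inner_apply, conj_trivial, Matrix.mulVec, dotProduct,
      Finset.sum_mul_sum]
    rw [EuclideanSpace.norm_sq_eq]
    simp [Matrix.mulVec, dotProduct, Finset.sum_mul_sum, sq]
    refine Finset.sum_congr rfl fun a _ => Finset.sum_congr rfl fun c _ =>
      Finset.sum_congr rfl fun c' _ => by ring
  have hMsqint : Integrable (fun ω => ‖M ω‖ ^ 2) μ := by
    rw [hMsq_eq]
    exact integrable_finset_sum _ fun a _ => integrable_finset_sum _ fun c _ =>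
      integrable_finset_sum _ fun c' _ => hMterm_int a c c'
  have hAacsq : ∀ (a : Fin d) (c : Fin m), Integrable (fun ω => A ω a c ^ 2) μ := by
    intro a c
    have := l2_mul_integrable (hAac a c) (hAac a c)
    simpa [sq] using this
  have hMsq : ∫ ω, ‖M ω‖ ^ 2 ∂μ = h * ∫ ω, ‖A ω‖ ^ 2 ∂μ := by
    rw [hMsq_eq]
    rw [integral_finset_sum _ fun a _ => integrable_finset_sum _ fun c _ =>
      integrable_finset_sum _ fun c' _ => hMterm_int a c c']
    have step1 : ∀ a : Fin d, ∫ ω, ∑ c, ∑ c', A ω a c * A ω a c' * (W ω c * W ω c') ∂μ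
        = ∑ c, ∑ c', ∫ ω, A ω a c * A ω a c' * (W ω c * W ω c') ∂μ := by
      intro a
      rw [integral_finset_sum _ fun c _ => integrable_finset_sum _ fun c' _ => hMterm_int a c c']
      exact Finset.sum_congr rfl fun c _ =>
        integral_finset_sum _ fun c' _ => hMterm_int a c c'
    have step2 : ∀ (a : Fin d) (c c' : Fin m),
        ∫ ω, A ω a c * A ω a c' * (W ω c * W ω c') ∂μ
          = (∫ ω, A ω a c * A ω a c' ∂μ) * (if c = c' then h else 0) := by
      intro a c c'
      have := (covind a c c').integral_fun_mul_eq_mul_integral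
        (l2_mul_integrable (hAac a c) (hAac a c')).aestronglyMeasurable
        (l2_mul_integrable (hWc2 c) (hWc2 c')).aestronglyMeasurable
      rw [hWcov c c'] at this
      simpa [Pi.mul_apply] using this
    simp_rw [step1, step2]
    have step3 : ∀ a : Fin d, ∑ c, ∑ c' : Fin m,
        (∫ ω, A ω a c * A ω a c' ∂μ) * (if c = c' then h else 0)
        = ∑ c, (∫ ω, A ω a c ^ 2 ∂μ) * h := by
      intro a
      refine Finset.sum_congr rfl fun c _ => ?_
      rw [Finset.sum_eq_single c]
      · simp [sq]
      · intro c' _ hne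
        simp [(Ne.symm hne : ¬ c = c')]
      · intro habs
        exact absurd (Finset.mem_univ c) habs
    simp_rw [step3]
    have step4 : ∫ ω, ‖A ω‖ ^ 2 ∂μ = ∑ a, ∑ c, ∫ ω, A ω a c ^ 2 ∂μ := by
      have e1 : (fun ω => ‖A ω‖ ^ 2) = fun ω => ∑ a, ∑ c, A ω a c ^ 2 := by
        funext ω; exact frob_sq (A ω)
      rw [e1, integral_finset_sum _ fun a _ => integrable_finset_sum _ fun c _ => hAacsq a c]
      exact Finset.sum_congr rfl fun a _ => integral_finset_sum _ fun c _ => hAacsq a c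
    rw [step4, Finset.mul_sum]
    refine Finset.sum_congr rfl fun a _ => ?_
    rw [Finset.mul_sum]
    exact Finset.sum_congr rfl fun c _ => mul_comm _ _
  -- the recursion identity
  have hrec : ∀ ω, (X0 ω + h • b (X0 ω) (Y0 ω) (Z0 ω)
          + (EuclideanSpace.equiv (Fin d) ℝ).symm (Matrix.mulVec (σ (X0 ω) (Y0 ω)) (W ω)))
        - (X1 ω + h • b (X1 ω) (Y1 ω) (Z1 ω)
          + (EuclideanSpace.equiv (Fin d) ℝ).symm (Matrix.mulVec (σ (X1 ω) (Y1 ω)) (W ω)))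
        = ξ' ω + M ω := by
    intro ω
    simp only [hξ'def, hξdef, hdbdef, hMdef, hAdef, Matrix.sub_mulVec, map_sub, smul_sub]
    abel
  -- pointwise estimate
  have hpt : ∀ ω, ‖ξ' ω‖ ^ 2 + h * ‖A ω‖ ^ 2
      ≤ (1 + (2 * kb + lam1 + Lsx + Lbx * h) * h) * ‖ξ ω‖ ^ 2
        + ((lam1⁻¹ + h) * Lby + Lsy) * h * ‖dY ω‖ ^ 2
        + Lbz * (h + lam1⁻¹) * h * ‖dZ ω‖ ^ 2 := by
    intro ω
    set e : EuclideanSpace ℝ (Fin d) := b (X1 ω) (Y0 ω) (Z0 ω) - b (X1 ω) (Y1 ω) (Z1 ω) with hedef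
    have hsplit : db ω = (b (X0 ω) (Y0 ω) (Z0 ω) - b (X1 ω) (Y0 ω) (Z0 ω)) + e := by
      rw [hedef, hdbdef]; abel
    have hnorm : ‖ξ' ω‖ ^ 2 = ‖ξ ω‖ ^ 2 + 2 * (h * ⟪ξ ω, db ω⟫) + h ^ 2 * ‖db ω‖ ^ 2 := by
      simp only [hξ'def]
      rw [norm_add_sq_real, real_inner_smul_right, norm_smul]
      rw [Real.norm_eq_abs, mul_pow, sq_abs]
    have hinner1 : ⟪ξ ω, db ω⟫ ≤ kb * ‖ξ ω‖ ^ 2 + ‖e‖ * ‖ξ ω‖ := by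
      rw [hsplit, inner_add_right]
      have h1 : ⟪ξ ω, b (X0 ω) (Y0 ω) (Z0 ω) - b (X1 ω) (Y0 ω) (Z0 ω)⟫ ≤ kb * ‖ξ ω‖ ^ 2 := by
        rw [real_inner_comm]
        exact hbmono (X0 ω) (X1 ω) (Y0 ω) (Z0 ω)
      have h2 : ⟪ξ ω, e⟫ ≤ ‖ξ ω‖ * ‖e‖ := real_inner_le_norm _ _
      nlinarith [h1, h2]
    have he2 : ‖e‖ ^ 2 ≤ Lby * ‖dY ω‖ ^ 2 + Lbz * ‖dZ ω‖ ^ 2 := by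
      have := hbLip (X1 ω) (X1 ω) (Y0 ω) (Y1 ω) (Z0 ω) (Z1 ω)
      simpa using this
    have hdb2 : ‖db ω‖ ^ 2 ≤ Lbx * ‖ξ ω‖ ^ 2 + Lby * ‖dY ω‖ ^ 2 + Lbz * ‖dZ ω‖ ^ 2 :=
      hbLip _ _ _ _ _ _
    have hA2 : ‖A ω‖ ^ 2 ≤ Lsx * ‖ξ ω‖ ^ 2 + Lsy * ‖dY ω‖ ^ 2 := hσLip _ _ _ _
    have hinv : lam1⁻¹ * lam1 = 1 := inv_mul_cancel₀ hlam1.ne'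
    have m2 : 2 * (‖e‖ * ‖ξ ω‖) ≤ lam1 * ‖ξ ω‖ ^ 2 + lam1⁻¹ * ‖e‖ ^ 2 := by
      nlinarith [mul_nonneg (inv_nonneg.mpr hlam1.le) (sq_nonneg (lam1 * ‖ξ ω‖ - ‖e‖)), hinv]
    have m1 := mul_le_mul_of_nonneg_left hinner1 (by positivity : (0:ℝ) ≤ 2 * h)
    have m3 := mul_le_mul_of_nonneg_left m2 hh.le
    have m4 := mul_le_mul_of_nonneg_left he2
      (by positivity : (0:ℝ) ≤ h * lam1⁻¹)
    have m5 := mul_le_mul_of_nonneg_left hdb2 (sq_nonneg h)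
    have m6 := mul_le_mul_of_nonneg_left hA2 hh.le
    rw [hnorm]
    nlinarith [m1, m3, m4, m5, m6]
  -- assembling
  have hintRHS : Integrable (fun ω =>
      (1 + (2 * kb + lam1 + Lsx + Lbx * h) * h) * ‖ξ ω‖ ^ 2
        + ((lam1⁻¹ + h) * Lby + Lsy) * h * ‖dY ω‖ ^ 2
        + Lbz * (h + lam1⁻¹) * h * ‖dZ ω‖ ^ 2) μ :=
    ((hξsq.const_mul _).add (hdYsq.const_mul _)).add (hdZsq.const_mul _)
  calc ∫ ω, ‖(X0 ω + h • b (X0 ω) (Y0 ω) (Z0 ω)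
          + (EuclideanSpace.equiv (Fin d) ℝ).symm (Matrix.mulVec (σ (X0 ω) (Y0 ω)) (W ω)))
        - (X1 ω + h • b (X1 ω) (Y1 ω) (Z1 ω)
          + (EuclideanSpace.equiv (Fin d) ℝ).symm (Matrix.mulVec (σ (X1 ω) (Y1 ω)) (W ω)))‖ ^ 2 ∂μ
      = ∫ ω, (‖ξ' ω‖ ^ 2 + 2 * ⟪ξ' ω, M ω⟫ + ‖M ω‖ ^ 2) ∂μ := by
        refine integral_congr_ae (Filter.Eventually.of_forall fun ω => ?_)
        simp only []
        rw [hrec ω, norm_add_sq_real]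
    _ = (∫ ω, ‖ξ' ω‖ ^ 2 ∂μ) + 2 * (∫ ω, ⟪ξ' ω, M ω⟫ ∂μ) + ∫ ω, ‖M ω‖ ^ 2 ∂μ := by
        rw [integral_add (show Integrable (fun ω => ‖ξ' ω‖ ^ 2 + 2 * ⟪ξ' ω, M ω⟫) μ from
            hξ'sq.add (hinner_int.const_mul 2)) hMsqint,
          integral_add hξ'sq (hinner_int.const_mul 2), integral_const_mul]
    _ = (∫ ω, ‖ξ' ω‖ ^ 2 ∂μ) + h * ∫ ω, ‖A ω‖ ^ 2 ∂μ := by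
        rw [hcross_zero, hMsq]; ring
    _ = ∫ ω, (‖ξ' ω‖ ^ 2 + h * ‖A ω‖ ^ 2) ∂μ := by
        rw [integral_add hξ'sq (hAsq.const_mul h), integral_const_mul]
    _ ≤ ∫ ω, ((1 + (2 * kb + lam1 + Lsx + Lbx * h) * h) * ‖ξ ω‖ ^ 2
        + ((lam1⁻¹ + h) * Lby + Lsy) * h * ‖dY ω‖ ^ 2
        + Lbz * (h + lam1⁻¹) * h * ‖dZ ω‖ ^ 2) ∂μ := by
        refine integral_mono (hξ'sq.add (hAsq.const_mul h)) hintRHS hpt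
    _ = (1 + (2 * kb + lam1 + Lsx + Lbx * h) * h) * ∫ ω, ‖ξ ω‖ ^ 2 ∂μ
        + ((lam1⁻¹ + h) * Lby + Lsy) * h * ∫ ω, ‖dY ω‖ ^ 2 ∂μ
        + Lbz * (h + lam1⁻¹) * h * ∫ ω, ‖dZ ω‖ ^ 2 ∂μ := by
        rw [integral_add (show Integrable (fun ω =>
              (1 + (2 * kb + lam1 + Lsx + Lbx * h) * h) * ‖ξ ω‖ ^ 2
                + ((lam1⁻¹ + h) * Lby + Lsy) * h * ‖dY ω‖ ^ 2) μ from
            (hξsq.const_mul _).add (hdYsq.const_mul _))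
            (hdZsq.const_mul (Lbz * (h + lam1⁻¹) * h)),
          integral_add (hξsq.const_mul (1 + (2 * kb + lam1 + Lsx + Lbx * h) * h))
            (hdYsq.const_mul (((lam1⁻¹ + h) * Lby + Lsy) * h)),
          integral_const_mul, integral_const_mul, integral_const_mul]

/-- Multi-step forward estimate (inequality (23) of Lemma 3.1): the differences of two
solutions of the discretized forward equation, with `Z`-dependent drift, are bounded by
weighted sums of the differences in `Y` and `Z`. -/
theorem forward_estimate
    {Ω : Type*} [mΩ : MeasurableSpace Ω] (μ : Measure Ω) [IsProbabilityMeasure μ]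
    (d q m N : ℕ) (hN : 1 ≤ N) (h lam1 : ℝ) (hh : 0 < h) (hlam1 : 0 < lam1)
    (kb Lbx Lby Lbz Lsx Lsy : ℝ)
    (hLbx : 0 ≤ Lbx) (hLby : 0 ≤ Lby) (hLbz : 0 ≤ Lbz) (hLsx : 0 ≤ Lsx) (hLsy : 0 ≤ Lsy)
    (hK1h : 1 + (2 * kb + lam1 + Lsx + Lbx * h) * h ≥ 0)
    (ℱ : Filtration ℕ mΩ)
    (W : ℕ → Ω → EuclideanSpace ℝ (Fin m))
    (hWmeas : ∀ i < N, Measurable[ℱ (i + 1)] (W i))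
    (hWindep : ∀ i < N, Indep (MeasurableSpace.comap (W i) inferInstance) (ℱ i) μ)
    (hWL2 : ∀ i < N, MemLp (W i) 2 μ)
    (hWmean : ∀ i < N, ∫ ω, W i ω ∂μ = 0)
    (hWcov : ∀ i < N, ∀ a b : Fin m, ∫ ω, W i ω a * W i ω b ∂μ = if a = b then h else 0)
    (b : ℕ → EuclideanSpace ℝ (Fin d) → EuclideanSpace ℝ (Fin q) →
      Matrix (Fin q) (Fin m) ℝ → EuclideanSpace ℝ (Fin d))
    (σ : ℕ → EuclideanSpace ℝ (Fin d) → EuclideanSpace ℝ (Fin q) → Matrix (Fin d) (Fin m) ℝ)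
    (hbmono : ∀ i < N, ∀ x1 x2 y z, ⟪b i x1 y z - b i x2 y z, x1 - x2⟫ ≤ kb * ‖x1 - x2‖ ^ 2)
    (hbLip : ∀ i < N, ∀ x1 x2 y1 y2 z1 z2,
      ‖b i x1 y1 z1 - b i x2 y2 z2‖ ^ 2
        ≤ Lbx * ‖x1 - x2‖ ^ 2 + Lby * ‖y1 - y2‖ ^ 2 + Lbz * ‖z1 - z2‖ ^ 2)
    (hσLip : ∀ i < N, ∀ x1 x2 y1 y2,
      ‖σ i x1 y1 - σ i x2 y2‖ ^ 2 ≤ Lsx * ‖x1 - x2‖ ^ 2 + Lsy * ‖y1 - y2‖ ^ 2)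
    (X : Fin 2 → ℕ → Ω → EuclideanSpace ℝ (Fin d))
    (Y : Fin 2 → ℕ → Ω → EuclideanSpace ℝ (Fin q))
    (Z : Fin 2 → ℕ → Ω → Matrix (Fin q) (Fin m) ℝ)
    (hXmeas : ∀ j, ∀ i ≤ N, Measurable[ℱ i] (X j i)) (hXL2 : ∀ j, ∀ i ≤ N, MemLp (X j i) 2 μ)
    (hYmeas : ∀ j, ∀ i ≤ N, Measurable[ℱ i] (Y j i)) (hYL2 : ∀ j, ∀ i ≤ N, MemLp (Y j i) 2 μ)
    (hZmeas : ∀ j, ∀ i ≤ N, Measurable[ℱ i] (Z j i)) (hZL2 : ∀ j, ∀ i ≤ N, MemLp (Z j i) 2 μ)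
    (hX0 : X 0 0 = X 1 0)
    (hXrec : ∀ j, ∀ i < N, ∀ ω, X j (i + 1) ω
      = X j i ω + h • b i (X j i ω) (Y j i ω) (Z j i ω)
        + (EuclideanSpace.equiv (Fin d) ℝ).symm
            (Matrix.mulVec (σ i (X j i ω) (Y j i ω)) (W i ω))) :
    ∀ n ≤ N,
      ∫ ω, ‖X 0 n ω - X 1 n ω‖ ^ 2 ∂μ
        ≤ ((lam1⁻¹ + h) * Lby + Lsy) * h *
            ∑ i ∈ Finset.range n,
              Real.exp ((2 * kb + lam1 + Lsx + Lbx * h) * ((n : ℝ) - i - 1) * h) *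
                ∫ ω, ‖Y 0 i ω - Y 1 i ω‖ ^ 2 ∂μ
          + Lbz * (h + lam1⁻¹) * h *
            ∑ i ∈ Finset.range n,
              Real.exp ((2 * kb + lam1 + Lsx + Lbx * h) * ((n : ℝ) - i - 1) * h) *
                ∫ ω, ‖Z 0 i ω - Z 1 i ω‖ ^ 2 ∂μ := by
  have hEY : ∀ i : ℕ, 0 ≤ ∫ ω, ‖Y 0 i ω - Y 1 i ω‖ ^ 2 ∂μ :=
    fun i => integral_nonneg fun ω => by positivity
  have hEZ : ∀ i : ℕ, 0 ≤ ∫ ω, ‖Z 0 i ω - Z 1 i ω‖ ^ 2 ∂μ :=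
    fun i => integral_nonneg fun ω => by positivity
  intro n hn
  induction n with
  | zero =>
    rw [hX0]
    simp
  | succ k ih =>
    have hk : k < N := lt_of_lt_of_le (Nat.lt_succ_self k) hn
    have ihk := ih hk.le
    have key : ∫ ω, ‖X 0 (k + 1) ω - X 1 (k + 1) ω‖ ^ 2 ∂μ
        ≤ (1 + (2 * kb + lam1 + Lsx + Lbx * h) * h) * ∫ ω, ‖X 0 k ω - X 1 k ω‖ ^ 2 ∂μ
          + ((lam1⁻¹ + h) * Lby + Lsy) * h * ∫ ω, ‖Y 0 k ω - Y 1 k ω‖ ^ 2 ∂μ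
          + Lbz * (h + lam1⁻¹) * h * ∫ ω, ‖Z 0 k ω - Z 1 k ω‖ ^ 2 ∂μ := by
      have os := one_step μ d q m h lam1 hh hlam1 kb Lbx Lby Lbz Lsx Lsy
        hLbx hLby hLbz hLsx hLsy ℱ k (W k) (hWindep k hk) (hWL2 k hk) (hWmean k hk)
        (hWcov k hk) (b k) (σ k) (hbmono k hk) (hbLip k hk) (hσLip k hk)
        (X 0 k) (X 1 k) (Y 0 k) (Y 1 k) (Z 0 k) (Z 1 k)
        (hXmeas 0 k hk.le) (hXmeas 1 k hk.le) (hYmeas 0 k hk.le) (hYmeas 1 k hk.le)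
        (hZmeas 0 k hk.le) (hZmeas 1 k hk.le)
        (hXL2 0 k hk.le) (hXL2 1 k hk.le) (hYL2 0 k hk.le) (hYL2 1 k hk.le)
        (hZL2 0 k hk.le) (hZL2 1 k hk.le)
      calc ∫ ω, ‖X 0 (k + 1) ω - X 1 (k + 1) ω‖ ^ 2 ∂μ
          = ∫ ω, ‖(X 0 k ω + h • b k (X 0 k ω) (Y 0 k ω) (Z 0 k ω)
              + (EuclideanSpace.equiv (Fin d) ℝ).symm
                  (Matrix.mulVec (σ k (X 0 k ω) (Y 0 k ω)) (W k ω)))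
            - (X 1 k ω + h • b k (X 1 k ω) (Y 1 k ω) (Z 1 k ω)
              + (EuclideanSpace.equiv (Fin d) ℝ).symm
                  (Matrix.mulVec (σ k (X 1 k ω) (Y 1 k ω)) (W k ω)))‖ ^ 2 ∂μ := by
            refine integral_congr_ae (Filter.Eventually.of_forall fun ω => ?_)
            simp only []
            rw [hXrec 0 k hk ω, hXrec 1 k hk ω]
        _ ≤ _ := os
    -- arithmetic with the sums
    set K1 : ℝ := 2 * kb + lam1 + Lsx + Lbx * h with hK1def
    have hexp : ∀ i : ℕ, (1 + K1 * h) * Real.exp (K1 * ((k : ℝ) - i - 1) * h)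
        ≤ Real.exp (K1 * (((k + 1 : ℕ) : ℝ) - i - 1) * h) := by
      intro i
      have h1 : K1 * h + 1 ≤ Real.exp (K1 * h) := Real.add_one_le_exp _
      have h2 : Real.exp (K1 * (((k + 1 : ℕ) : ℝ) - i - 1) * h)
          = Real.exp (K1 * h) * Real.exp (K1 * ((k : ℝ) - i - 1) * h) := by
        rw [← Real.exp_add]; congr 1; push_cast; ring
      rw [h2]
      exact mul_le_mul_of_nonneg_right (by linarith) (Real.exp_pos _).le
    have hsumY : (1 + K1 * h) * ∑ i ∈ Finset.range k,
          Real.exp (K1 * ((k : ℝ) - i - 1) * h) * ∫ ω, ‖Y 0 i ω - Y 1 i ω‖ ^ 2 ∂μ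
        ≤ ∑ i ∈ Finset.range k,
          Real.exp (K1 * (((k + 1 : ℕ) : ℝ) - i - 1) * h) * ∫ ω, ‖Y 0 i ω - Y 1 i ω‖ ^ 2 ∂μ := by
      rw [Finset.mul_sum]
      refine Finset.sum_le_sum fun i _ => ?_
      rw [← mul_assoc]
      exact mul_le_mul_of_nonneg_right (hexp i) (hEY i)
    have hsumZ : (1 + K1 * h) * ∑ i ∈ Finset.range k,
          Real.exp (K1 * ((k : ℝ) - i - 1) * h) * ∫ ω, ‖Z 0 i ω - Z 1 i ω‖ ^ 2 ∂μ
        ≤ ∑ i ∈ Finset.range k,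
          Real.exp (K1 * (((k + 1 : ℕ) : ℝ) - i - 1) * h) * ∫ ω, ‖Z 0 i ω - Z 1 i ω‖ ^ 2 ∂μ := by
      rw [Finset.mul_sum]
      refine Finset.sum_le_sum fun i _ => ?_
      rw [← mul_assoc]
      exact mul_le_mul_of_nonneg_right (hexp i) (hEZ i)
    have e0 : Real.exp (K1 * (((k + 1 : ℕ) : ℝ) - (k : ℕ) - 1) * h) = 1 := by
      rw [show K1 * (((k + 1 : ℕ) : ℝ) - (k : ℕ) - 1) * h = 0 by push_cast; ring, Real.exp_zero]
    rw [Finset.sum_range_succ, Finset.sum_range_succ, e0, one_mul]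
    have hK2 : (0:ℝ) ≤ ((lam1⁻¹ + h) * Lby + Lsy) * h := by positivity
    have hC1 : (0:ℝ) ≤ Lbz * (h + lam1⁻¹) * h := by positivity
    have step1 := mul_le_mul_of_nonneg_left ihk hK1h
    have step2 := mul_le_mul_of_nonneg_left hsumY hK2
    have step3 := mul_le_mul_of_nonneg_left hsumZ hC1
    nlinarith [key, step1, step2, step3]
end

section
/- Let N ≥ 1, h > 0, c ∈ ℝ with c·h < 1, and κ ≥ 0. Let (y_n)_{n=0}^{N} and (x_n)_{n=0}^{N−1} be sequences of nonnegative real numbers with y_i ≤ (1 − ch)^{-1}(y_{i+1} + κ·x_i·h) for all 0 ≤ i ≤ N−1. Set K3 := −ln(1 − ch)/h and K4 := κ/(1 − ch). Then for every 0 ≤ n ≤ N, y_n ≤ e^{K3(N−n)h}·y_N + K4·Σ_{i=n}^{N−1} e^{K3(i−n)h}·x_i·h. -/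
/-- Backward discrete Gronwall-type induction used in the second estimate of Lemma 3.1. -/
theorem backward_discrete_gronwall
    (N : ℕ) (hN : 1 ≤ N) (h : ℝ) (hh : 0 < h) (c : ℝ) (hch : c * h < 1)
    (κ : ℝ) (hκ : 0 ≤ κ)
    (y x : ℕ → ℝ)
    (hy : ∀ n ≤ N, 0 ≤ y n) (hx : ∀ i < N, 0 ≤ x i)
    (hrec : ∀ i < N, y i ≤ (1 - c * h)⁻¹ * (y (i + 1) + κ * x i * h)) :
    ∀ n ≤ N,
      y n ≤ Real.exp ((-Real.log (1 - c * h) / h) * ((N : ℝ) - n) * h) * y N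
        + (κ / (1 - c * h)) *
          ∑ i ∈ Finset.Ico n N,
            Real.exp ((-Real.log (1 - c * h) / h) * ((i : ℝ) - n) * h) * x i * h := by
  have hb : 0 < 1 - c * h := by linarith
  set b := 1 - c * h with hbdef
  set a := b⁻¹ with hadef
  have ha : 0 < a := inv_pos.mpr hb
  have key : ∀ m : ℕ, ∀ n : ℕ, n + m = N →
      y n ≤ a ^ m * y N + (κ * a) * ∑ i ∈ Finset.Ico n N, a ^ (i - n) * x i * h := by
    intro m
    induction m with
    | zero =>
        intro n hn
        have : n = N := by omega
        subst this
        simp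
    | succ m ih =>
        intro n hn
        have hnN : n < N := by omega
        have h1 := hrec n hnN
        have h2 := ih (n + 1) (by omega)
        set S' := ∑ i ∈ Finset.Ico (n + 1) N, a ^ (i - (n + 1)) * x i * h with hS'
        have hsum : ∑ i ∈ Finset.Ico n N, a ^ (i - n) * x i * h
            = x n * h + a * S' := by
          rw [Finset.sum_eq_sum_Ico_succ_bot hnN]
          simp only [Nat.sub_self, pow_zero, one_mul]
          rw [hS', Finset.mul_sum]
          congr 1
          apply Finset.sum_congr rfl
          intro i hi
          have hi' : n + 1 ≤ i := (Finset.mem_Ico.mp hi).1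
          have : i - n = (i - (n + 1)) + 1 := by omega
          rw [this, pow_succ]
          ring
        rw [hsum]
        have h3 : a * (y (n + 1) + κ * x n * h)
            ≤ a * (a ^ m * y N + κ * a * S' + κ * x n * h) := by
          apply mul_le_mul_of_nonneg_left _ ha.le
          linarith
        calc y n ≤ a * (y (n + 1) + κ * x n * h) := h1
          _ ≤ a * (a ^ m * y N + κ * a * S' + κ * x n * h) := h3
          _ = a ^ (m + 1) * y N + κ * a * (x n * h + a * S') := by ring
  intro n hn
  have hexp : ∀ m : ℕ, Real.exp ((-Real.log b / h) * (m : ℝ) * h) = a ^ m := by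
    intro m
    have heq : (-Real.log b / h) * (m : ℝ) * h = (m : ℝ) * (-Real.log b) := by
      field_simp
    rw [heq, Real.exp_nat_mul, Real.exp_neg, Real.exp_log hb]
  have hNcast : ((N : ℝ) - n) = ((N - n : ℕ) : ℝ) := by
    rw [Nat.cast_sub hn]
  have hsumeq : ∑ i ∈ Finset.Ico n N,
      Real.exp ((-Real.log b / h) * ((i : ℝ) - n) * h) * x i * h
      = ∑ i ∈ Finset.Ico n N, a ^ (i - n) * x i * h := by
    apply Finset.sum_congr rfl
    intro i hi
    have hi' : n ≤ i := (Finset.mem_Ico.mp hi).1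
    rw [show ((i : ℝ) - n) = ((i - n : ℕ) : ℝ) by rw [Nat.cast_sub hi'], hexp]
  rw [hNcast, hexp, hsumeq, div_eq_mul_inv]
  exact key (N - n) n (by omega)
end

section
/- Let 𝒢 ⊆ 𝓕 be a sub-σ-algebra, h > 0, λ3 > 0, and let L_x, L_y, L_z, a, c be nonnegative real numbers. Let V and F be square-integrable ℝ^q-valued random variables, define U := 𝔼[V + h·F | 𝒢], and assume 𝔼[‖F‖²] ≤ L_x·a + L_y·𝔼[‖U‖²] + L_z·c. Then (1 − (h + λ3^{-1})·h·L_y)·𝔼[‖U‖²] ≤ (1 + λ3·h)·𝔼[‖𝔼[V | 𝒢]‖²] + (h + λ3^{-1})·h·(L_x·a + L_z·c). -/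
open MeasureTheory
open scoped ENNReal NNReal

section aux
variable {Ω : Type*} {m mΩ : MeasurableSpace Ω} {μ : Measure Ω} [IsProbabilityMeasure μ]
variable {E : Type*} [NormedAddCommGroup E] [InnerProductSpace ℝ E] [CompleteSpace E]

lemma condexp_ae_eq_condExpL2' (hm : m ≤ mΩ) {f : Ω → E} (hf : MemLp f 2 μ) :
    μ[f|m] =ᵐ[μ] (condExpL2 E ℝ hm (hf.toLp f) : Ω →₂[μ] E) := by
  refine (ae_eq_condExp_of_forall_setIntegral_eq hm (hf.integrable one_le_two)
    (fun s hs hμs => integrableOn_condExpL2_of_measure_ne_top hm hμs.ne _)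
    (fun s hs hμs => ?_) (aestronglyMeasurable_condExpL2 hm _)).symm
  rw [integral_condExpL2_eq hm (hf.toLp f) hs hμs.ne]
  exact setIntegral_congr_ae (hm s hs) (hf.coeFn_toLp.mono fun x hx _ => hx)

lemma memℒp_two_condexp (hm : m ≤ mΩ) {f : Ω → E} (hf : MemLp f 2 μ) :
    MemLp (μ[f|m]) 2 μ :=
  (Lp.memLp _).ae_eq (condexp_ae_eq_condExpL2' hm hf).symm

lemma eLpNorm_two_condexp_le (hm : m ≤ mΩ) {f : Ω → E} (hf : MemLp f 2 μ) :
    eLpNorm (μ[f|m]) 2 μ ≤ eLpNorm f 2 μ := by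
  calc eLpNorm (μ[f|m]) 2 μ
      = eLpNorm (condExpL2 E ℝ hm (hf.toLp f) : Ω →₂[μ] E) 2 μ :=
        eLpNorm_congr_ae (condexp_ae_eq_condExpL2' hm hf)
    _ ≤ eLpNorm (hf.toLp f : Ω →₂[μ] E) 2 μ := eLpNorm_condExpL2_le hm _
    _ = eLpNorm f 2 μ := eLpNorm_congr_ae hf.coeFn_toLp

lemma integral_norm_sq_condexp_le (hm : m ≤ mΩ) {f : Ω → E} (hf : MemLp f 2 μ) :
    ∫ ω, ‖(μ[f|m]) ω‖ ^ 2 ∂μ ≤ ∫ ω, ‖f ω‖ ^ 2 ∂μ := by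
  have h1 := (memℒp_two_condexp hm hf).eLpNorm_eq_integral_rpow_norm two_ne_zero ENNReal.ofNat_ne_top
  have h2 := hf.eLpNorm_eq_integral_rpow_norm two_ne_zero ENNReal.ofNat_ne_top
  have hle := eLpNorm_two_condexp_le hm hf
  rw [h1, h2] at hle
  have htr : (2 : ℝ≥0∞).toReal = 2 := by simp
  rw [htr] at hle
  have hA : 0 ≤ ∫ ω, ‖(μ[f|m]) ω‖ ^ (2:ℝ) ∂μ := by positivity
  have hB : 0 ≤ ∫ ω, ‖f ω‖ ^ (2:ℝ) ∂μ := by positivity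
  have := (ENNReal.ofReal_le_ofReal_iff (by positivity)).mp hle
  have h3 : ∫ ω, ‖(μ[f|m]) ω‖ ^ (2:ℝ) ∂μ ≤ ∫ ω, ‖f ω‖ ^ (2:ℝ) ∂μ := by
    have := Real.rpow_le_rpow (by positivity) this (by norm_num : (0:ℝ) ≤ 2)
    rwa [← Real.rpow_mul hA, ← Real.rpow_mul hB, show (2:ℝ)⁻¹ * 2 = 1 by norm_num,
      Real.rpow_one, Real.rpow_one] at this
  calc ∫ ω, ‖(μ[f|m]) ω‖ ^ 2 ∂μ = ∫ ω, ‖(μ[f|m]) ω‖ ^ (2:ℝ) ∂μ := by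
        refine integral_congr_ae (Filter.Eventually.of_forall fun ω => ?_)
        exact (Real.rpow_two _).symm
    _ ≤ ∫ ω, ‖f ω‖ ^ (2:ℝ) ∂μ := h3
    _ = ∫ ω, ‖f ω‖ ^ 2 ∂μ := by
        refine integral_congr_ae (Filter.Eventually.of_forall fun ω => ?_)
        exact (Real.rpow_two _)

end aux

/-- One-step backward estimate (proof of Lemma 3.2, first part): bound on the second moment
of `U = 𝔼[V + h·F | 𝒢]` under a quadratic growth bound on the driver `F`. -/
theorem one_step_backward_estimate
    {Ω : Type*} [mΩ : MeasurableSpace Ω] (μ : Measure Ω) [IsProbabilityMeasure μ]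
    (q : ℕ) (G : MeasurableSpace Ω) (hG : G ≤ mΩ)
    (h lam3 Lx Ly Lz a c : ℝ) (hh : 0 < h) (hlam3 : 0 < lam3)
    (hLx : 0 ≤ Lx) (hLy : 0 ≤ Ly) (hLz : 0 ≤ Lz) (ha : 0 ≤ a) (hc : 0 ≤ c)
    (V F : Ω → EuclideanSpace ℝ (Fin q))
    (hV : MemLp V 2 μ) (hF : MemLp F 2 μ)
    (U : Ω → EuclideanSpace ℝ (Fin q))
    (hU : U = μ[fun ω => V ω + h • F ω | G])
    (hFbound : ∫ ω, ‖F ω‖ ^ 2 ∂μ ≤ Lx * a + Ly * ∫ ω, ‖U ω‖ ^ 2 ∂μ + Lz * c) :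
    (1 - (h + lam3⁻¹) * h * Ly) * ∫ ω, ‖U ω‖ ^ 2 ∂μ
      ≤ (1 + lam3 * h) * ∫ ω, ‖(μ[V | G]) ω‖ ^ 2 ∂μ
        + (h + lam3⁻¹) * h * (Lx * a + Lz * c) := by
  set ε : ℝ := lam3 * h with hε_def
  have hε : 0 < ε := mul_pos hlam3 hh
  have hVi : Integrable V μ := hV.integrable one_le_two
  have hhF : MemLp (fun ω => h • F ω) 2 μ := hF.const_smul h
  have hVF : MemLp (fun ω => V ω + h • F ω) 2 μ := hV.add hhF
  have hUmem : MemLp U 2 μ := hU ▸ memℒp_two_condexp hG hVF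
  have hcV : MemLp (μ[V|G]) 2 μ := memℒp_two_condexp hG hV
  have hcF : MemLp (μ[F|G]) 2 μ := memℒp_two_condexp hG hF
  -- decomposition of U
  have hsum : U =ᵐ[μ] fun ω => (μ[V|G]) ω + h • (μ[F|G]) ω := by
    rw [hU]
    have h1 : μ[fun ω => V ω + h • F ω|G]
        =ᵐ[μ] μ[V|G] + μ[fun ω => h • F ω|G] :=
      condExp_add hVi (hhF.integrable one_le_two) G
    have h2 : μ[fun ω => h • F ω|G] =ᵐ[μ] h • μ[F|G] := condExp_smul h F G
    filter_upwards [h1, h2] with ω hw1 hw2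
    simp only [Pi.add_apply] at hw1
    rw [hw1, hw2]
    rfl
  -- integrability of the squared norms
  have iU : Integrable (fun ω => ‖U ω‖ ^ 2) μ :=
    (memLp_two_iff_integrable_sq_norm hUmem.1).mp hUmem
  have iV2 : Integrable (fun ω => ‖(μ[V|G]) ω‖ ^ 2) μ :=
    (memLp_two_iff_integrable_sq_norm hcV.1).mp hcV
  have iF2 : Integrable (fun ω => ‖(μ[F|G]) ω‖ ^ 2) μ :=
    (memLp_two_iff_integrable_sq_norm hcF.1).mp hcF
  -- pointwise Young-type inequality, integrated
  have key : ∫ ω, ‖U ω‖ ^ 2 ∂μ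
      ≤ ∫ ω, ((1 + ε) * ‖(μ[V|G]) ω‖ ^ 2 + ((1 + ε⁻¹) * h ^ 2) * ‖(μ[F|G]) ω‖ ^ 2) ∂μ := by
    refine integral_mono_ae iU ((iV2.const_mul _).add (iF2.const_mul _)) ?_
    filter_upwards [hsum] with ω hw
    have hxy : ‖U ω‖ ≤ ‖(μ[V|G]) ω‖ + h * ‖(μ[F|G]) ω‖ := by
      rw [hw]
      refine (norm_add_le _ _).trans ?_
      rw [norm_smul, Real.norm_eq_abs, abs_of_pos hh]
    have hx : (0:ℝ) ≤ ‖(μ[V|G]) ω‖ := norm_nonneg _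
    have hy : (0:ℝ) ≤ ‖(μ[F|G]) ω‖ := norm_nonneg _
    have hU2 : ‖U ω‖ ^ 2 ≤ (‖(μ[V|G]) ω‖ + h * ‖(μ[F|G]) ω‖) ^ 2 := by
      have := norm_nonneg (U ω)
      nlinarith
    refine hU2.trans ?_
    set x := ‖(μ[V|G]) ω‖
    set y := ‖(μ[F|G]) ω‖
    have hq : ε * x ^ 2 + (h ^ 2 / ε) * y ^ 2 - 2 * x * (h * y) = (ε * x - h * y) ^ 2 / ε := by
      field_simp; ring
    have hsq : (0:ℝ) ≤ (ε * x - h * y) ^ 2 / ε := by positivity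
    have hinv : (1 + ε⁻¹) * h ^ 2 = h ^ 2 + h ^ 2 / ε := by field_simp
    nlinarith [hsq, hq]
  rw [integral_add (iV2.const_mul _) (iF2.const_mul _), integral_const_mul, integral_const_mul] at key
  -- contraction of conditional expectation in L²
  have hcontr : ∫ ω, ‖(μ[F|G]) ω‖ ^ 2 ∂μ ≤ ∫ ω, ‖F ω‖ ^ 2 ∂μ :=
    integral_norm_sq_condexp_le hG hF
  have hcoef : (1 + ε⁻¹) * h ^ 2 = (h + lam3⁻¹) * h := by
    rw [hε_def]; field_simp
  have hK : (0:ℝ) ≤ (h + lam3⁻¹) * h := by positivity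
  rw [hcoef] at key
  have hchain : ∫ ω, ‖(μ[F|G]) ω‖ ^ 2 ∂μ
      ≤ Lx * a + Ly * ∫ ω, ‖U ω‖ ^ 2 ∂μ + Lz * c := hcontr.trans hFbound
  have h2' := mul_le_mul_of_nonneg_left hchain hK
  nlinarith [key, h2']
end

section
/- Let N ≥ 1, h > 0, T := N·h, let K1, K3 be real numbers with K1 + K3 ≠ 0, and let K4, L ≥ 0, λ4 > 0, E ≥ 0. Let (x_n)_{n=0}^{N} and (y_n)_{n=0}^{N} be sequences of nonnegative real numbers such that y_n ≤ e^{K3(N−n)h}·y_N + K4·Σ_{i=n}^{N−1} e^{K3(i−n)h}·x_i·h for all 0 ≤ n ≤ N, and y_N ≤ (1 + λ4^{-1})·E + L·(1 + λ4)·x_N. Define 𝒳 := max_{0 ≤ n ≤ N} e^{−K1·n·h}·x_n and 𝒴 := max_{0 ≤ n ≤ N} e^{K3·n·h}·y_n. Then 𝒴 ≤ e^{K3·T}·(1 + λ4^{-1})·E + (L·(1 + λ4)·e^{(K1+K3)T} + K4·h·(e^{(K1+K3)T} − 1)/(e^{(K1+K3)h} − 1))·𝒳. -/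
/-- Weighted-maximum estimate (inequality (39) in the proof of Theorem 3.3) combining the
backward discrete Gronwall bound with the Lipschitz bound at the terminal time. -/
theorem weighted_maximum_estimate
    (N : ℕ) (hN : 1 ≤ N) (h : ℝ) (hh : 0 < h) (T : ℝ) (hT : T = N * h)
    (K1 K3 : ℝ) (hK : K1 + K3 ≠ 0)
    (K4 L lam4 E : ℝ) (hK4 : 0 ≤ K4) (hL : 0 ≤ L) (hlam4 : 0 < lam4) (hE : 0 ≤ E)
    (x y : ℕ → ℝ) (hx : ∀ n ≤ N, 0 ≤ x n) (hy : ∀ n ≤ N, 0 ≤ y n)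
    (hrec : ∀ n ≤ N,
      y n ≤ Real.exp (K3 * ((N : ℝ) - n) * h) * y N
        + K4 * ∑ i ∈ Finset.Ico n N, Real.exp (K3 * ((i : ℝ) - n) * h) * x i * h)
    (hterm : y N ≤ (1 + lam4⁻¹) * E + L * (1 + lam4) * x N) :
    ((Finset.range (N + 1)).sup' Finset.nonempty_range_add_one
        fun n => Real.exp (K3 * n * h) * y n)
      ≤ Real.exp (K3 * T) * (1 + lam4⁻¹) * E
        + (L * (1 + lam4) * Real.exp ((K1 + K3) * T)
            + K4 * h * (Real.exp ((K1 + K3) * T) - 1) / (Real.exp ((K1 + K3) * h) - 1))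
          * ((Finset.range (N + 1)).sup' Finset.nonempty_range_add_one
              fun n => Real.exp (-K1 * n * h) * x n) := by
  set X := (Finset.range (N + 1)).sup' Finset.nonempty_range_add_one
      (fun n => Real.exp (-K1 * n * h) * x n) with hXdef
  set r := Real.exp ((K1 + K3) * h) with hrdef
  have hr1 : r ≠ 1 := by
    rw [hrdef, Ne, Real.exp_eq_one_iff]
    exact mul_ne_zero hK hh.ne'
  have hXnn : 0 ≤ X := by
    have h0 : Real.exp (-K1 * (0 : ℕ) * h) * x 0 ≤ X :=
      Finset.le_sup' (fun n : ℕ => Real.exp (-K1 * n * h) * x n)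
        (Finset.mem_range.mpr (Nat.succ_pos N))
    have h1 : 0 ≤ Real.exp (-K1 * (0 : ℕ) * h) * x 0 :=
      mul_nonneg (Real.exp_pos _).le (hx 0 (by omega))
    linarith
  have hxb : ∀ i ≤ N, x i ≤ Real.exp (K1 * i * h) * X := by
    intro i hi
    have h1 : Real.exp (-K1 * i * h) * x i ≤ X :=
      Finset.le_sup' (fun n : ℕ => Real.exp (-K1 * n * h) * x n)
        (Finset.mem_range.mpr (by omega))
    have h2 : Real.exp (K1 * i * h) * (Real.exp (-K1 * i * h) * x i)
        ≤ Real.exp (K1 * i * h) * X :=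
      mul_le_mul_of_nonneg_left h1 (Real.exp_pos _).le
    have h3 : Real.exp (K1 * i * h) * Real.exp (-K1 * i * h) = 1 := by
      rw [← Real.exp_add]
      norm_num
    calc x i = Real.exp (K1 * i * h) * Real.exp (-K1 * i * h) * x i := by
          rw [h3, one_mul]
      _ = Real.exp (K1 * i * h) * (Real.exp (-K1 * i * h) * x i) := by ring
      _ ≤ Real.exp (K1 * i * h) * X := h2
  -- geometric sum
  have hgeom : ∑ i ∈ Finset.range N, r ^ i = (r ^ N - 1) / (r - 1) :=
    geom_sum_eq hr1 N
  have hrNT : r ^ N = Real.exp ((K1 + K3) * T) := by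
    rw [hrdef, ← Real.exp_nat_mul, hT]; ring_nf
  -- terminal bound
  have hterm' : Real.exp (K3 * N * h) * y N
      ≤ Real.exp (K3 * T) * (1 + lam4⁻¹) * E
        + L * (1 + lam4) * Real.exp ((K1 + K3) * T) * X := by
    have hLp : 0 ≤ L * (1 + lam4) := mul_nonneg hL (by linarith)
    have h1 : y N ≤ (1 + lam4⁻¹) * E + L * (1 + lam4) * (Real.exp (K1 * N * h) * X) := by
      have := hxb N le_rfl
      nlinarith [hterm]
    have h2 : Real.exp (K3 * N * h) * y N
        ≤ Real.exp (K3 * N * h) * ((1 + lam4⁻¹) * E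
          + L * (1 + lam4) * (Real.exp (K1 * N * h) * X)) :=
      mul_le_mul_of_nonneg_left h1 (Real.exp_pos _).le
    have h3 : Real.exp (K3 * N * h) * Real.exp (K1 * N * h)
        = Real.exp ((K1 + K3) * T) := by
      rw [← Real.exp_add, hT]; ring_nf
    have h4 : Real.exp (K3 * N * h) = Real.exp (K3 * T) := by rw [hT]; ring_nf
    calc Real.exp (K3 * N * h) * y N ≤ _ := h2
      _ = Real.exp (K3 * N * h) * (1 + lam4⁻¹) * E
          + L * (1 + lam4) * (Real.exp (K3 * N * h) * Real.exp (K1 * N * h)) * X := by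
          ring
      _ = Real.exp (K3 * T) * (1 + lam4⁻¹) * E
          + L * (1 + lam4) * Real.exp ((K1 + K3) * T) * X := by rw [h3, h4]
  apply Finset.sup'_le
  intro n hn
  have hn' : n ≤ N := Finset.mem_range_succ_iff.mp hn
  have e1 : Real.exp (K3 * n * h) * y n
      ≤ Real.exp (K3 * N * h) * y N
        + K4 * h * X * ∑ i ∈ Finset.Ico n N, r ^ i := by
    have h2 : Real.exp (K3 * n * h) * y n
        ≤ Real.exp (K3 * n * h) * (Real.exp (K3 * ((N : ℝ) - n) * h) * y N
          + K4 * ∑ i ∈ Finset.Ico n N, Real.exp (K3 * ((i : ℝ) - n) * h) * x i * h) :=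
      mul_le_mul_of_nonneg_left (hrec n hn') (Real.exp_pos _).le
    have h3 : Real.exp (K3 * n * h) * Real.exp (K3 * ((N : ℝ) - n) * h)
        = Real.exp (K3 * N * h) := by
      rw [← Real.exp_add]; ring_nf
    have h4 : ∀ i ∈ Finset.Ico n N,
        Real.exp (K3 * n * h) * (Real.exp (K3 * ((i : ℝ) - n) * h) * x i * h)
          ≤ r ^ i * (X * h) := by
      intro i hi
      obtain ⟨hni, hiN⟩ := Finset.mem_Ico.mp hi
      have hxi := hxb i hiN.le
      have h5 : Real.exp (K3 * n * h) * Real.exp (K3 * ((i : ℝ) - n) * h)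
          = Real.exp (K3 * i * h) := by
        rw [← Real.exp_add]; ring_nf
      have h6 : Real.exp (K3 * i * h) * Real.exp (K1 * i * h) = r ^ i := by
        rw [← Real.exp_add, hrdef, ← Real.exp_nat_mul]; ring_nf
      calc Real.exp (K3 * n * h) * (Real.exp (K3 * ((i : ℝ) - n) * h) * x i * h)
          = Real.exp (K3 * i * h) * x i * h := by rw [← mul_assoc, ← mul_assoc, h5]
        _ ≤ Real.exp (K3 * i * h) * (Real.exp (K1 * i * h) * X) * h := by
            exact mul_le_mul_of_nonneg_right
              (mul_le_mul_of_nonneg_left hxi (Real.exp_pos _).le) hh.le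
        _ = r ^ i * (X * h) := by rw [← h6]; ring
    have h7 : Real.exp (K3 * n * h)
        * ∑ i ∈ Finset.Ico n N, Real.exp (K3 * ((i : ℝ) - n) * h) * x i * h
        ≤ (∑ i ∈ Finset.Ico n N, r ^ i) * (X * h) := by
      rw [Finset.mul_sum, Finset.sum_mul]
      exact Finset.sum_le_sum h4
    have h8 : 0 ≤ Real.exp (K3 * n * h)
        * ∑ i ∈ Finset.Ico n N, Real.exp (K3 * ((i : ℝ) - n) * h) * x i * h
        → True := fun _ => trivial
    calc Real.exp (K3 * n * h) * y n ≤ _ := h2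
      _ = Real.exp (K3 * N * h) * y N
          + K4 * (Real.exp (K3 * n * h)
            * ∑ i ∈ Finset.Ico n N, Real.exp (K3 * ((i : ℝ) - n) * h) * x i * h) := by
          rw [mul_add, ← mul_assoc, h3]; ring
      _ ≤ Real.exp (K3 * N * h) * y N
          + K4 * ((∑ i ∈ Finset.Ico n N, r ^ i) * (X * h)) := by
          have := mul_le_mul_of_nonneg_left h7 hK4
          linarith
      _ = Real.exp (K3 * N * h) * y N + K4 * h * X * ∑ i ∈ Finset.Ico n N, r ^ i := by
          ring
  have e2 : ∑ i ∈ Finset.Ico n N, r ^ i ≤ (r ^ N - 1) / (r - 1) := by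
    rw [← hgeom]
    apply Finset.sum_le_sum_of_subset_of_nonneg
    · intro i hi
      exact Finset.mem_range.mpr (Finset.mem_Ico.mp hi).2
    · intro i _ _
      positivity
  have e3 : K4 * h * X * ∑ i ∈ Finset.Ico n N, r ^ i
      ≤ K4 * h * (Real.exp ((K1 + K3) * T) - 1) / (Real.exp ((K1 + K3) * h) - 1) * X := by
    have hpos : 0 ≤ K4 * h * X := mul_nonneg (mul_nonneg hK4 hh.le) hXnn
    have := mul_le_mul_of_nonneg_left e2 hpos
    calc K4 * h * X * ∑ i ∈ Finset.Ico n N, r ^ i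
        ≤ K4 * h * X * ((r ^ N - 1) / (r - 1)) := this
      _ = K4 * h * (Real.exp ((K1 + K3) * T) - 1) / (Real.exp ((K1 + K3) * h) - 1) * X := by
          rw [← hrNT, ← hrdef]; ring
  calc Real.exp (K3 * n * h) * y n
      ≤ Real.exp (K3 * N * h) * y N + K4 * h * X * ∑ i ∈ Finset.Ico n N, r ^ i := e1
    _ ≤ (Real.exp (K3 * T) * (1 + lam4⁻¹) * E
          + L * (1 + lam4) * Real.exp ((K1 + K3) * T) * X)
        + K4 * h * (Real.exp ((K1 + K3) * T) - 1) / (Real.exp ((K1 + K3) * h) - 1) * X := by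
        linarith
    _ = Real.exp (K3 * T) * (1 + lam4⁻¹) * E
        + (L * (1 + lam4) * Real.exp ((K1 + K3) * T)
            + K4 * h * (Real.exp ((K1 + K3) * T) - 1) / (Real.exp ((K1 + K3) * h) - 1))
          * X := by ring
end

section
/- For every integer m ≥ 1, all real constants k^b, k^f, and all nonnegative constants L^b_x, L^b_y, L^b_z, L^σ_x, L^σ_y, L^f_x, L^f_y, L^f_z, L^g_x, there exists T_0 > 0 such that for every time horizon T with 0 < T < T_0 there exist λ1 > 0, λ2 > L^f_z, λ3 > 2mL^f_z and λ4 > 0 satisfying B̄ < 1 and Ā < 1. -/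
/-- The difference quotient `(e^{cT} - 1)/c`, interpreted as `T` when `c = 0`. -/
noncomputable def expQuot (c T : ℝ) : ℝ :=
  if c = 0 then T else (Real.exp (c * T) - 1) / c

/-- The difference quotient `(1 - e^{-cT})/c`, interpreted as `T` when `c = 0`. -/
noncomputable def expQuotNeg (c T : ℝ) : ℝ :=
  if c = 0 then T else (1 - Real.exp (-(c * T))) / c

/-- The contraction constant `B̄` from Theorem 3.3. -/
noncomputable def Bbar (m : ℕ) (T kb Lsx Lbz Lfx Lfz Lgx lam1 lam3 lam4 : ℝ) : ℝ :=
  let K1 : ℝ := 2 * kb + lam1 + Lsx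
  let C1 : ℝ := lam1⁻¹ * Lbz
  let C3 : ℝ := 2 * lam3⁻¹
  let C4 : ℝ := (m : ℝ) / (1 - 2 * (m : ℝ) * Lfz * lam3⁻¹)
  Real.exp (max (-(K1 * T)) 0) * Lfx * C1 * C4 * C3 * expQuot K1 T
    + Real.exp (max (-(K1 * T)) 0) * C1 * C4 * Lgx * (1 + lam4) * Real.exp (K1 * T)

/-- The contraction constant `Ā` from Theorem 3.3. -/
noncomputable def Abar (m : ℕ)
    (T kb kf Lby Lbz Lsx Lsy Lfx Lfy Lfz Lgx lam1 lam2 lam3 lam4 : ℝ) : ℝ :=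
  let K1 : ℝ := 2 * kb + lam1 + Lsx
  let K2 : ℝ := lam1⁻¹ * Lby + Lsy
  let K3 : ℝ := 2 * kf + lam2
  let K4 : ℝ := Lfx / lam2
  let C1 : ℝ := lam1⁻¹ * Lbz
  let C2 : ℝ := 2 * (lam3⁻¹ * Lfy + lam3)
  let C4 : ℝ := (m : ℝ) / (1 - 2 * (m : ℝ) * Lfz * lam3⁻¹)
  (Lgx * (1 + lam4) * Real.exp ((K1 + K3) * T) + K4 * expQuot (K1 + K3) T)
    * (1 - Bbar m T kb Lsx Lbz Lfx Lfz Lgx lam1 lam3 lam4)⁻¹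
    * (K2 * expQuotNeg (K1 + K3) T
        + Real.exp (max (-(K1 * T)) 0) * C1 * C4 * C2 * expQuotNeg K3 T)

@[simp] lemma expQuot_zero (c : ℝ) : expQuot c 0 = 0 := by
  unfold expQuot; split <;> simp

@[simp] lemma expQuotNeg_zero (c : ℝ) : expQuotNeg c 0 = 0 := by
  unfold expQuotNeg; split <;> simp

@[fun_prop] lemma continuous_expQuot (c : ℝ) : Continuous (fun T => expQuot c T) := by
  by_cases h : c = 0 <;> simp only [expQuot, h, if_true, if_false] <;> fun_prop

@[fun_prop] lemma continuous_expQuotNeg (c : ℝ) : Continuous (fun T => expQuotNeg c T) := by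
  by_cases h : c = 0 <;> simp only [expQuotNeg, h, if_true, if_false] <;> fun_prop

@[fun_prop] lemma continuous_Bbar (m : ℕ) (kb Lsx Lbz Lfx Lfz Lgx lam1 lam3 lam4 : ℝ) :
    Continuous (fun T => Bbar m T kb Lsx Lbz Lfx Lfz Lgx lam1 lam3 lam4) := by
  unfold Bbar; fun_prop

lemma continuousAt_Abar (m : ℕ) (kb kf Lby Lbz Lsx Lsy Lfx Lfy Lfz Lgx lam1 lam2 lam3 lam4 : ℝ)
    (h : 1 - Bbar m 0 kb Lsx Lbz Lfx Lfz Lgx lam1 lam3 lam4 ≠ 0) :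
    ContinuousAt (fun T => Abar m T kb kf Lby Lbz Lsx Lsy Lfx Lfy Lfz Lgx lam1 lam2 lam3 lam4) 0 := by
  have h1 : ContinuousAt (fun T => (1 - Bbar m T kb Lsx Lbz Lfx Lfz Lgx lam1 lam3 lam4)⁻¹) 0 :=
    ContinuousAt.inv₀ (by fun_prop) h
  unfold Abar
  exact (ContinuousAt.mul (ContinuousAt.mul (by fun_prop) h1) (by fun_prop))

/-- Small time duration: for sufficiently small time horizons the sufficient conditions
`B̄ < 1` and `Ā < 1` of Theorem 3.3 can be satisfied. -/
theorem small_time_duration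
    (m : ℕ) (hm : 1 ≤ m) (kb kf Lbx Lby Lbz Lsx Lsy Lfx Lfy Lfz Lgx : ℝ)
    (hLbx : 0 ≤ Lbx) (hLby : 0 ≤ Lby) (hLbz : 0 ≤ Lbz) (hLsx : 0 ≤ Lsx) (hLsy : 0 ≤ Lsy)
    (hLfx : 0 ≤ Lfx) (hLfy : 0 ≤ Lfy) (hLfz : 0 ≤ Lfz) (hLgx : 0 ≤ Lgx) :
    ∃ T0 > (0 : ℝ), ∀ T : ℝ, 0 < T → T < T0 →
      ∃ lam1 > (0 : ℝ), ∃ lam2 > Lfz, ∃ lam3 > 2 * (m : ℝ) * Lfz, ∃ lam4 > (0 : ℝ),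
        Bbar m T kb Lsx Lbz Lfx Lfz Lgx lam1 lam3 lam4 < 1 ∧
        Abar m T kb kf Lby Lbz Lsx Lsy Lfx Lfy Lfz Lgx lam1 lam2 lam3 lam4 < 1 := by
  set M : ℝ := (m : ℝ) with hM
  have hM1 : (1 : ℝ) ≤ M := by simp only [hM]; exact_mod_cast hm
  have hM0 : (0 : ℝ) ≤ M := by linarith
  set lam1 : ℝ := 1 + 8 * M * Lbz * Lgx with hlam1
  set lam2 : ℝ := Lfz + 1 with hlam2
  set lam3 : ℝ := 1 + 4 * M * Lfz with hlam3
  have hbl : 0 ≤ M * Lbz * Lgx := by positivity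
  have hlam1pos : (0 : ℝ) < lam1 := by simp only [hlam1]; nlinarith
  have hlam3pos : (0 : ℝ) < lam3 := by simp only [hlam3]; nlinarith [mul_nonneg hM0 hLfz]
  have hlam3gt : 2 * M * Lfz < lam3 := by
    simp only [hlam3]; nlinarith [mul_nonneg hM0 hLfz]
  -- the denominator of C4
  have hfrac : 2 * M * Lfz * lam3⁻¹ ≤ 1 / 2 := by
    rw [← div_eq_mul_inv, div_le_iff₀ hlam3pos]
    simp only [hlam3]; nlinarith [mul_nonneg hM0 hLfz]
  have hDpos : (0 : ℝ) < 1 - 2 * M * Lfz * lam3⁻¹ := by linarith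
  have hC4 : M / (1 - 2 * M * Lfz * lam3⁻¹) ≤ 2 * M := by
    rw [div_le_iff₀ hDpos]; nlinarith
  have hC4pos : 0 ≤ M / (1 - 2 * M * Lfz * lam3⁻¹) := by positivity
  -- value of Bbar at T = 0
  have hB0 : Bbar m 0 kb Lsx Lbz Lfx Lfz Lgx lam1 lam3 1 < 1 := by
    simp only [Bbar, mul_zero, neg_zero, max_self, Real.exp_zero, expQuot_zero, zero_add,
      one_mul, mul_one, mul_zero, zero_mul]
    calc lam1⁻¹ * Lbz * (M / (1 - 2 * M * Lfz * lam3⁻¹)) * Lgx * (1 + 1)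
        ≤ lam1⁻¹ * Lbz * (2 * M) * Lgx * (1 + 1) := by
          gcongr
      _ < 1 := by
          rw [show lam1⁻¹ * Lbz * (2 * M) * Lgx * (1 + 1) = (4 * (M * Lbz * Lgx)) / lam1 by
            field_simp; ring]
          rw [div_lt_one hlam1pos]
          simp only [hlam1]; nlinarith
  -- the combined function of T
  set f : ℝ → ℝ := fun T => max (Bbar m T kb Lsx Lbz Lfx Lfz Lgx lam1 lam3 1)
      (Abar m T kb kf Lby Lbz Lsx Lsy Lfx Lfy Lfz Lgx lam1 lam2 lam3 1) with hf
  have hBlt : 1 - Bbar m 0 kb Lsx Lbz Lfx Lfz Lgx lam1 lam3 1 ≠ 0 := by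
    intro h; nlinarith [hB0]
  have hcB : ContinuousAt (fun T => Bbar m T kb Lsx Lbz Lfx Lfz Lgx lam1 lam3 1) 0 :=
    (continuous_Bbar m kb Lsx Lbz Lfx Lfz Lgx lam1 lam3 1).continuousAt
  have hcA := continuousAt_Abar m kb kf Lby Lbz Lsx Lsy Lfx Lfy Lfz Lgx lam1 lam2 lam3 1 hBlt
  have hfc : ContinuousAt f 0 := hcB.max hcA
  have hA0 : Abar m 0 kb kf Lby Lbz Lsx Lsy Lfx Lfy Lfz Lgx lam1 lam2 lam3 1 = 0 := by
    simp [Abar]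
  have hf0 : f 0 < 1 := by
    simp only [hf, hA0]
    exact max_lt hB0 one_pos
  obtain ⟨δ, hδpos, hδ⟩ := Metric.continuousAt_iff.mp hfc (1 - f 0) (by linarith)
  refine ⟨δ, hδpos, fun T hT hTδ => ?_⟩
  have hd : dist T 0 < δ := by rw [Real.dist_eq, sub_zero, abs_of_pos hT]; exact hTδ
  have h2 := hδ hd
  rw [Real.dist_eq] at h2
  have h3 := abs_sub_lt_iff.mp h2
  have hfT : f T < 1 := by linarith [h3.1]
  refine ⟨lam1, hlam1pos, lam2, by simp [hlam2], lam3, hlam3gt, 1, one_pos, ?_, ?_⟩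
  · exact lt_of_le_of_lt (le_max_left _ _) hfT
  · exact lt_of_le_of_lt (le_max_right _ _) hfT
end

section
/- Fix an integer m ≥ 1, a time horizon T > 0, real constants k^b, k^f, nonnegative constants L^b_x, L^b_y, L^σ_x, L^σ_y, L^f_y, L^f_z, and parameters λ1 > 0, λ2 > L^f_z, λ3 > 2mL^f_z, λ4 > 0. Then there exists ε > 0 such that for all nonnegative L^g_x ≤ ε, L^f_x ≤ ε and L^b_z ≤ ε, the quantities B̄ and Ā (computed with these constants and parameters) satisfy max(B̄, Ā) < 1. -/
/-- Weak coupling from the SDE to the BSDE: if `L^g_x`, `L^f_x` and `L^b_z` are small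
enough then `max(B̄, Ā) < 1`. -/
theorem weak_coupling_sde_to_bsde
    (m : ℕ) (hm : 1 ≤ m) (T : ℝ) (hT : 0 < T) (kb kf : ℝ)
    (Lbx Lby Lsx Lsy Lfy Lfz : ℝ)
    (hLbx : 0 ≤ Lbx) (hLby : 0 ≤ Lby) (hLsx : 0 ≤ Lsx) (hLsy : 0 ≤ Lsy)
    (hLfy : 0 ≤ Lfy) (hLfz : 0 ≤ Lfz)
    (lam1 lam2 lam3 lam4 : ℝ)
    (hlam1 : 0 < lam1) (hlam2 : Lfz < lam2) (hlam3 : 2 * (m : ℝ) * Lfz < lam3)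
    (hlam4 : 0 < lam4) :
    ∃ ε > (0 : ℝ), ∀ Lgx Lfx Lbz : ℝ,
      0 ≤ Lgx → Lgx ≤ ε → 0 ≤ Lfx → Lfx ≤ ε → 0 ≤ Lbz → Lbz ≤ ε →
        max (Bbar m T kb Lsx Lbz Lfx Lfz Lgx lam1 lam3 lam4)
            (Abar m T kb kf Lby Lbz Lsx Lsy Lfx Lfy Lfz Lgx lam1 lam2 lam3 lam4) < 1 := by
  set F : ℝ × ℝ × ℝ → ℝ := fun p =>
    max (Bbar m T kb Lsx p.2.2 p.2.1 Lfz p.1 lam1 lam3 lam4)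
        (Abar m T kb kf Lby p.2.2 Lsx Lsy p.2.1 Lfy Lfz p.1 lam1 lam2 lam3 lam4) with hF
  have hB : ContinuousAt (fun p : ℝ × ℝ × ℝ =>
      Bbar m T kb Lsx p.2.2 p.2.1 Lfz p.1 lam1 lam3 lam4) 0 := by
    simp only [Bbar]
    fun_prop
  have hB0 : Bbar m T kb Lsx 0 0 Lfz 0 lam1 lam3 lam4 = 0 := by
    simp [Bbar]
  have hA0 : Abar m T kb kf Lby 0 Lsx Lsy 0 Lfy Lfz 0 lam1 lam2 lam3 lam4 = 0 := by
    simp [Abar]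
  have hinv : ContinuousAt (fun p : ℝ × ℝ × ℝ =>
      (1 - Bbar m T kb Lsx p.2.2 p.2.1 Lfz p.1 lam1 lam3 lam4)⁻¹) 0 := by
    apply ContinuousAt.inv₀ (continuousAt_const.sub hB)
    simp [hB0]
  have hA : ContinuousAt (fun p : ℝ × ℝ × ℝ =>
      Abar m T kb kf Lby p.2.2 Lsx Lsy p.2.1 Lfy Lfz p.1 lam1 lam2 lam3 lam4) 0 := by
    simp only [Abar]
    exact (((by fun_prop : ContinuousAt (fun p : ℝ × ℝ × ℝ =>
        p.1 * (1 + lam4) * Real.exp (((2 * kb + lam1 + Lsx) + (2 * kf + lam2)) * T)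
          + p.2.1 / lam2 * expQuot ((2 * kb + lam1 + Lsx) + (2 * kf + lam2)) T) 0).mul
      hinv).mul (by fun_prop))
  have hFc : ContinuousAt F 0 := hB.max hA
  have hF0 : F 0 = 0 := by simp [hF, hB0, hA0]
  have hev : ∀ᶠ p in nhds (0 : ℝ × ℝ × ℝ), F p < 1 := by
    have := hFc.tendsto
    rw [hF0] at this
    exact this.eventually_lt_const one_pos
  rw [Metric.eventually_nhds_iff] at hev
  obtain ⟨δ, hδ, hδ'⟩ := hev
  refine ⟨δ / 2, by positivity, fun Lgx Lfx Lbz h1 h2 h3 h4 h5 h6 => ?_⟩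
  have : F (Lgx, Lfx, Lbz) < 1 := by
    apply hδ'
    simp only [Prod.dist_eq, Real.dist_eq, dist_zero_right, Real.norm_eq_abs]
    have e1 : |Lgx - 0| < δ := by rw [abs_of_nonneg (by linarith)]; linarith
    have e2 : |Lfx - 0| < δ := by rw [abs_of_nonneg (by linarith)]; linarith
    have e3 : |Lbz - 0| < δ := by rw [abs_of_nonneg (by linarith)]; linarith
    exact max_lt (by simpa using e1) (max_lt (by simpa using e2) (by simpa using e3))
  exact this
end

section
/- Fix an integer m ≥ 1, a time horizon T > 0, a real constant k^f, and nonnegative constants L^b_x, L^b_y, L^σ_x, L^σ_y, L^f_x, L^f_y, L^f_z, L^g_x. Then there exist c < 0 and ε > 0 such that for every real k^b ≤ c and every nonnegative L^b_z ≤ ε, there exist λ1 > 0, λ2 > L^f_z, λ3 > 2mL^f_z and λ4 > 0 for which the quantities B̄ and Ā (computed with these constants and parameters) satisfy max(B̄, Ā) < 1. -/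
lemma expQuot_neg_nonneg {c T : ℝ} (hc : c < 0) (hT : 0 < T) : 0 ≤ expQuot c T := by
  rw [expQuot, if_neg hc.ne]
  have h1 : Real.exp (c * T) ≤ 1 := Real.exp_le_one_iff.mpr (by nlinarith)
  rw [div_nonneg_iff]; right; exact ⟨by linarith, hc.le⟩

lemma expQuot_neg_le {c T : ℝ} (hc : c < 0) (hT : 0 < T) : expQuot c T ≤ T := by
  rw [expQuot, if_neg hc.ne]
  have h2 : c * T + 1 ≤ Real.exp (c * T) := Real.add_one_le_exp _
  rw [div_le_iff_of_neg hc]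
  linarith

lemma expQuot_neg_mul_le {c T : ℝ} (hc : c < 0) : expQuot c T * (-c) ≤ 1 := by
  rw [expQuot, if_neg hc.ne]
  have hne : c ≠ 0 := hc.ne
  have h2 : (Real.exp (c * T) - 1) / c * (-c) = 1 - Real.exp (c * T) := by
    field_simp
    ring
  rw [h2]; linarith [Real.exp_pos (c * T)]

lemma exp_mul_expQuotNeg {c T : ℝ} (hc : c ≠ 0) :
    Real.exp (c * T) * expQuotNeg c T = expQuot c T := by
  rw [expQuot, expQuotNeg, if_neg hc, if_neg hc]
  have h : Real.exp (c * T) * Real.exp (-(c * T)) = 1 := by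
    rw [← Real.exp_add]; simp
  field_simp
  nlinarith [h]

lemma expQuotNeg_neg_nonneg {c T : ℝ} (hc : c < 0) (hT : 0 < T) : 0 ≤ expQuotNeg c T := by
  rw [expQuotNeg, if_neg hc.ne]
  have h1 : (1:ℝ) ≤ Real.exp (-(c * T)) := Real.one_le_exp (by nlinarith)
  rw [div_nonneg_iff]; right; exact ⟨by linarith, hc.le⟩

lemma expQuotNeg_neg_le {c T : ℝ} (hc : c ≤ -1) (hT : 0 < T) :
    expQuotNeg c T ≤ Real.exp (-(c * T)) := by
  have hc0 : c < 0 := by linarith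
  rw [expQuotNeg, if_neg hc0.ne]
  have h1 : (1:ℝ) ≤ Real.exp (-(c * T)) := Real.one_le_exp (by nlinarith)
  rw [div_le_iff_of_neg hc0]
  nlinarith

lemma expQuotNeg_pos_nonneg {c T : ℝ} (hc : 0 < c) (hT : 0 < T) : 0 ≤ expQuotNeg c T := by
  rw [expQuotNeg, if_neg hc.ne']
  have h1 : Real.exp (-(c * T)) ≤ 1 := Real.exp_le_one_iff.mpr (by nlinarith)
  exact div_nonneg (by linarith) hc.le

lemma expQuotNeg_pos_le {c T : ℝ} (hc : 0 < c) (hT : 0 < T) : expQuotNeg c T ≤ T := by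
  rw [expQuotNeg, if_neg hc.ne']
  have h2 : -(c * T) + 1 ≤ Real.exp (-(c * T)) := Real.add_one_le_exp _
  rw [div_le_iff₀ hc]
  nlinarith

set_option maxHeartbeats 1000000 in
/-- Monotonicity in `b`: if `k^b` is sufficiently negative and `L^b_z` sufficiently small,
then suitable parameters `λ₁, λ₂, λ₃, λ₄` yield `max(B̄, Ā) < 1`. -/
theorem monotonicity_in_b
    (m : ℕ) (hm : 1 ≤ m) (T : ℝ) (hT : 0 < T) (kf : ℝ)
    (Lbx Lby Lsx Lsy Lfx Lfy Lfz Lgx : ℝ)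
    (hLbx : 0 ≤ Lbx) (hLby : 0 ≤ Lby) (hLsx : 0 ≤ Lsx) (hLsy : 0 ≤ Lsy)
    (hLfx : 0 ≤ Lfx) (hLfy : 0 ≤ Lfy) (hLfz : 0 ≤ Lfz) (hLgx : 0 ≤ Lgx) :
    ∃ c < (0 : ℝ), ∃ ε > (0 : ℝ), ∀ kb : ℝ, kb ≤ c → ∀ Lbz : ℝ, 0 ≤ Lbz → Lbz ≤ ε →
      ∃ lam1 > (0 : ℝ), ∃ lam2 > Lfz, ∃ lam3 > 2 * (m : ℝ) * Lfz, ∃ lam4 > (0 : ℝ),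
        max (Bbar m T kb Lsx Lbz Lfx Lfz Lgx lam1 lam3 lam4)
            (Abar m T kb kf Lby Lbz Lsx Lsy Lfx Lfy Lfz Lgx lam1 lam2 lam3 lam4) < 1 := by
  have hm' : (1:ℝ) ≤ (m:ℝ) := by exact_mod_cast hm
  have hm0 : (0:ℝ) ≤ (m:ℝ) := by linarith
  obtain ⟨K2m, hK2mdef⟩ : ∃ x : ℝ, x = Lby + Lsy := ⟨_, rfl⟩
  have hK2m0 : 0 ≤ K2m := by rw [hK2mdef]; exact add_nonneg hLby hLsy
  obtain ⟨R, hRdef⟩ : ∃ x : ℝ, x = 16 * Lgx * K2m + 16 := ⟨_, rfl⟩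
  have hR1 : (1:ℝ) ≤ R := by rw [hRdef]; nlinarith
  have hR0 : (0:ℝ) < R := by linarith
  obtain ⟨lam3, hlam3def⟩ : ∃ x : ℝ, x = 2 * (m:ℝ) * Lfz + 1 := ⟨_, rfl⟩
  have hlam3pos : (0:ℝ) < lam3 := by rw [hlam3def]; nlinarith
  have hlam3inv : (0:ℝ) ≤ lam3⁻¹ := inv_nonneg.mpr hlam3pos.le
  have hC4nn : (0:ℝ) ≤ (m:ℝ) * lam3 := mul_nonneg hm0 hlam3pos.le
  have hC3nn : (0:ℝ) ≤ 2 * lam3⁻¹ := by linarith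
  have hC2nn : (0:ℝ) ≤ 2 * (lam3⁻¹ * Lfy + lam3) := by nlinarith [mul_nonneg hlam3inv hLfy]
  have hC4eq : (m : ℝ) / (1 - 2 * (m : ℝ) * Lfz * lam3⁻¹) = (m:ℝ) * lam3 := by
    have h1 : (1:ℝ) - 2 * (m:ℝ) * Lfz * lam3⁻¹ = lam3⁻¹ := by
      rw [hlam3def]
      have hne : (2*(m:ℝ)*Lfz+1) ≠ 0 := by nlinarith
      field_simp
      ring
    rw [h1, div_eq_mul_inv, inv_inv]
  have hexpRT : (0:ℝ) < Real.exp (R*T) := Real.exp_pos _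
  obtain ⟨lam2, hlam2def⟩ : ∃ x : ℝ, x = Lfz + |2*kf| + 1 + 8*Lfx*T*(K2m+1)*Real.exp (R*T) :=
    ⟨_, rfl⟩
  have h8nn : (0:ℝ) ≤ 8*Lfx*T*(K2m+1)*Real.exp (R*T) :=
    mul_nonneg (mul_nonneg (mul_nonneg (by linarith) hT.le) (by linarith)) hexpRT.le
  have hlam2gt : Lfz < lam2 := by
    rw [hlam2def]; nlinarith [abs_nonneg (2*kf)]
  have hlam2one : (1:ℝ) ≤ lam2 := by
    rw [hlam2def]; nlinarith [abs_nonneg (2*kf)]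
  have hlam2pos : (0:ℝ) < lam2 := by linarith
  have hK3one : (1:ℝ) ≤ 2*kf + lam2 := by
    have h2 := neg_abs_le (2*kf)
    rw [hlam2def]; nlinarith
  have hK3pos : (0:ℝ) < 2*kf + lam2 := by linarith
  obtain ⟨N, hNdef⟩ : ∃ x : ℝ, x = R + 2*kf + lam2 := ⟨_, rfl⟩
  have hNpos : (0:ℝ) < N := by rw [hNdef]; linarith
  have heN : (0:ℝ) < Real.exp (N*T) := Real.exp_pos _
  obtain ⟨P, hPdef⟩ : ∃ x : ℝ,
      x = Real.exp (N*T) * Lfx * ((m:ℝ)*lam3) * (2*lam3⁻¹) * T + 2*(((m:ℝ)*lam3)*Lgx) :=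
    ⟨_, rfl⟩
  have hP0 : (0:ℝ) ≤ P := by
    rw [hPdef]
    have h1 : (0:ℝ) ≤ Real.exp (N*T) * Lfx * ((m:ℝ)*lam3) * (2*lam3⁻¹) * T :=
      mul_nonneg (mul_nonneg (mul_nonneg (mul_nonneg heN.le hLfx) hC4nn) hC3nn) hT.le
    linarith [h1, mul_nonneg hC4nn hLgx]
  obtain ⟨X, hXdef⟩ : ∃ x : ℝ,
      x = (2*Lgx + Lfx*T) * Real.exp (N*T) * ((m:ℝ)*lam3) * (2*(lam3⁻¹*Lfy+lam3)) * T :=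
    ⟨_, rfl⟩
  have hF1mnn : (0:ℝ) ≤ 2*Lgx + Lfx*T := by linarith [mul_nonneg hLfx hT.le]
  have hX0 : (0:ℝ) ≤ X := by
    rw [hXdef]
    exact mul_nonneg (mul_nonneg (mul_nonneg (mul_nonneg hF1mnn heN.le) hC4nn) hC2nn) hT.le
  obtain ⟨D, hDdef⟩ : ∃ x : ℝ, x = 2*P + 8*X + 1 := ⟨_, rfl⟩
  have hD0 : (0:ℝ) < D := by rw [hDdef]; linarith
  refine ⟨-(N + Lsx + 1)/2, by nlinarith, 1/D, by positivity, ?_⟩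
  intro kb hkb Lbz hLbz0 hLbzle
  obtain ⟨lam1, hlam1def⟩ : ∃ x : ℝ, x = -N - 2*kb - Lsx := ⟨_, rfl⟩
  have hlam1one : (1:ℝ) ≤ lam1 := by rw [hlam1def]; linarith
  have hlam1pos : (0:ℝ) < lam1 := by linarith
  have hlam1inv1 : lam1⁻¹ ≤ 1 := inv_le_one_of_one_le₀ hlam1one
  have hlam1inv0 : (0:ℝ) ≤ lam1⁻¹ := inv_nonneg.mpr hlam1pos.le
  refine ⟨lam1, hlam1pos, lam2, hlam2gt, lam3, by rw [hlam3def]; nlinarith, 1, one_pos, ?_⟩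
  have hK1eq : 2 * kb + lam1 + Lsx = -N := by rw [hlam1def]; ring
  have hSeq : 2 * kb + lam1 + Lsx + (2 * kf + lam2) = -R := by
    rw [hlam1def, hNdef]; ring
  have hmax : max (-(-N * T)) 0 = N * T := by
    rw [show -(-N * T) = N * T by ring]
    exact max_eq_left (mul_nonneg hNpos.le hT.le)
  have hBeq : Bbar m T kb Lsx Lbz Lfx Lfz Lgx lam1 lam3 1
      = Real.exp (N*T) * Lfx * (lam1⁻¹ * Lbz) * ((m:ℝ)*lam3) * (2*lam3⁻¹) * expQuot (-N) T
        + 2 * (lam1⁻¹ * Lbz * ((m:ℝ)*lam3) * Lgx) := by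
    simp only [Bbar]
    rw [hK1eq, hC4eq, hmax]
    have hee : Real.exp (N*T) * Real.exp (-N * T) = 1 := by
      rw [← Real.exp_add, show N*T + -N*T = 0 by ring]; exact Real.exp_zero
    linear_combination (lam1⁻¹ * Lbz * ((m:ℝ)*lam3) * Lgx * (1+1)) * hee
  have hAeq : Abar m T kb kf Lby Lbz Lsx Lsy Lfx Lfy Lfz Lgx lam1 lam2 lam3 1
      = (Lgx * (1+1) * Real.exp (-R * T) + Lfx / lam2 * expQuot (-R) T)
        * (1 - Bbar m T kb Lsx Lbz Lfx Lfz Lgx lam1 lam3 1)⁻¹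
        * ((lam1⁻¹ * Lby + Lsy) * expQuotNeg (-R) T
            + Real.exp (N*T) * (lam1⁻¹ * Lbz) * ((m:ℝ)*lam3) * (2*(lam3⁻¹*Lfy+lam3))
              * expQuotNeg (2*kf+lam2) T) := by
    simp only [Abar]
    rw [hSeq, hK1eq, hC4eq, hmax]
  have hRneg : -R < 0 := by linarith
  have hNneg : -N < 0 := by linarith
  have hqR0 : 0 ≤ expQuot (-R) T := expQuot_neg_nonneg hRneg hT
  have hqRT : expQuot (-R) T ≤ T := expQuot_neg_le hRneg hT
  have hqRinv : expQuot (-R) T * R ≤ 1 := by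
    have h := expQuot_neg_mul_le (T := T) hRneg
    rwa [neg_neg] at h
  have hqtR0 : 0 ≤ expQuotNeg (-R) T := expQuotNeg_neg_nonneg hRneg hT
  have hqtRle : expQuotNeg (-R) T ≤ Real.exp (R*T) := by
    have h := expQuotNeg_neg_le (T := T) (show -R ≤ -1 by linarith) hT
    rwa [show -(-R*T) = R*T by ring] at h
  have hEq : Real.exp (-R * T) * expQuotNeg (-R) T = expQuot (-R) T :=
    exp_mul_expQuotNeg hRneg.ne
  have hqtK0 : 0 ≤ expQuotNeg (2*kf+lam2) T := expQuotNeg_pos_nonneg hK3pos hT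
  have hqtKT : expQuotNeg (2*kf+lam2) T ≤ T := expQuotNeg_pos_le hK3pos hT
  have hqN0 : 0 ≤ expQuot (-N) T := expQuot_neg_nonneg hNneg hT
  have hqNT : expQuot (-N) T ≤ T := expQuot_neg_le hNneg hT
  have heR1 : Real.exp (-R * T) ≤ 1 := Real.exp_le_one_iff.mpr (by linarith only [mul_pos hR0 hT])
  have heR0 : (0:ℝ) < Real.exp (-R * T) := Real.exp_pos _
  have hC1nn : 0 ≤ lam1⁻¹ * Lbz := mul_nonneg hlam1inv0 hLbz0
  have hC1le : lam1⁻¹ * Lbz ≤ 1/D := by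
    linarith only [mul_le_mul_of_nonneg_right hlam1inv1 hLbz0, hLbzle]
  have hK2le : lam1⁻¹ * Lby + Lsy ≤ K2m := by
    rw [hK2mdef]
    linarith only [mul_le_mul_of_nonneg_right hlam1inv1 hLby]
  have hK2nn : 0 ≤ lam1⁻¹ * Lby + Lsy := add_nonneg (mul_nonneg hlam1inv0 hLby) hLsy
  have hco1 : 0 ≤ Real.exp (N*T) * Lfx * (lam1⁻¹ * Lbz) * ((m:ℝ)*lam3) * (2*lam3⁻¹) :=
    mul_nonneg (mul_nonneg (mul_nonneg (mul_nonneg heN.le hLfx) hC1nn) hC4nn) hC3nn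
  have hB0 : 0 ≤ Bbar m T kb Lsx Lbz Lfx Lfz Lgx lam1 lam3 1 := by
    rw [hBeq]
    have h2 : 0 ≤ lam1⁻¹ * Lbz * ((m:ℝ)*lam3) * Lgx :=
      mul_nonneg (mul_nonneg hC1nn hC4nn) hLgx
    linarith only [mul_nonneg hco1 hqN0, h2]
  have hBP : Bbar m T kb Lsx Lbz Lfx Lfz Lgx lam1 lam3 1 ≤ (lam1⁻¹ * Lbz) * P := by
    rw [hBeq, hPdef]
    linarith only [mul_le_mul_of_nonneg_left hqNT hco1]
  have hBhalf : Bbar m T kb Lsx Lbz Lfx Lfz Lgx lam1 lam3 1 ≤ 1/2 := by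
    have h1 : (lam1⁻¹ * Lbz) * P ≤ (1/D) * P := mul_le_mul_of_nonneg_right hC1le hP0
    have h2 : (1/D) * P ≤ 1/2 := by
      rw [div_mul_eq_mul_div, div_le_div_iff₀ hD0 (by norm_num : (0:ℝ) < 2)]
      rw [hDdef] at hD0 ⊢
      linarith only [hP0, hX0]
    linarith only [h1, h2, hBP]
  have hDX : (1/D) * X ≤ 1/8 := by
    rw [div_mul_eq_mul_div, div_le_div_iff₀ hD0 (by norm_num : (0:ℝ) < 8)]
    rw [hDdef]
    linarith only [hP0, hX0]
  have hIBpos : 0 < 1 - Bbar m T kb Lsx Lbz Lfx Lfz Lgx lam1 lam3 1 := by linarith only [hBhalf]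
  have hInv2 : (1 - Bbar m T kb Lsx Lbz Lfx Lfz Lgx lam1 lam3 1)⁻¹ ≤ 2 := by
    rw [show (2:ℝ) = ((1:ℝ)/2)⁻¹ by norm_num]
    exact inv_anti₀ (by norm_num) (by linarith only [hBhalf])
  have hInv0 : 0 ≤ (1 - Bbar m T kb Lsx Lbz Lfx Lfz Lgx lam1 lam3 1)⁻¹ :=
    inv_nonneg.mpr hIBpos.le
  have hK4nn : 0 ≤ Lfx / lam2 := div_nonneg hLfx hlam2pos.le
  have hK4le : Lfx / lam2 ≤ Lfx := div_le_self hLfx hlam2one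
  have hK4small : Lfx / lam2 * (T * (K2m * Real.exp (R*T))) ≤ 1/8 := by
    rw [div_mul_eq_mul_div, div_le_div_iff₀ hlam2pos (by norm_num : (0:ℝ) < 8)]
    rw [hlam2def]
    linarith only [hLfz, mul_nonneg (mul_nonneg hLfx hT.le) hexpRT.le, abs_nonneg (2*kf),
      mul_nonneg (mul_nonneg (mul_nonneg hLfx hT.le) hK2m0) hexpRT.le]
  apply max_lt
  · linarith only [hBhalf]
  · rw [hAeq]
    set a : ℝ := Lgx * (1+1) * Real.exp (-R * T) with hadef
    set b : ℝ := Lfx / lam2 * expQuot (-R) T with hbdef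
    set cc : ℝ := (lam1⁻¹ * Lby + Lsy) * expQuotNeg (-R) T with hccdef
    set d : ℝ := Real.exp (N*T) * (lam1⁻¹ * Lbz) * ((m:ℝ)*lam3) * (2*(lam3⁻¹*Lfy+lam3))
        * expQuotNeg (2*kf+lam2) T with hddef
    clear_value a b cc d
    have ha0 : 0 ≤ a := by
      rw [hadef]; exact mul_nonneg (mul_nonneg hLgx (by norm_num)) heR0.le
    have hb0 : 0 ≤ b := by rw [hbdef]; exact mul_nonneg hK4nn hqR0
    have hcc0 : 0 ≤ cc := by rw [hccdef]; exact mul_nonneg hK2nn hqtR0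
    have hd0 : 0 ≤ d := by
      rw [hddef]
      exact mul_nonneg (mul_nonneg (mul_nonneg (mul_nonneg heN.le hC1nn) hC4nn) hC2nn) hqtK0
    have ht1 : a * cc ≤ 1/8 := by
      have he : a * cc = 2 * (Lgx * (lam1⁻¹*Lby + Lsy)) * expQuot (-R) T := by
        rw [hadef, hccdef, ← hEq]; ring
      rw [he]
      have h16 : 16 * (Lgx * (lam1⁻¹*Lby + Lsy)) ≤ R := by
        rw [hRdef]
        linarith only [mul_le_mul_of_nonneg_left hK2le hLgx]
      linarith only [mul_le_mul_of_nonneg_right h16 hqR0, hqRinv,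
        mul_nonneg (mul_nonneg hLgx hK2nn) hqR0]
    have ht2 : b * cc ≤ 1/8 := by
      have hinner : (lam1⁻¹*Lby + Lsy) * expQuotNeg (-R) T ≤ K2m * Real.exp (R*T) :=
        mul_le_mul hK2le hqtRle hqtR0 hK2m0
      have houter : expQuot (-R) T * ((lam1⁻¹*Lby + Lsy) * expQuotNeg (-R) T)
          ≤ T * (K2m * Real.exp (R*T)) :=
        mul_le_mul hqRT hinner (mul_nonneg hK2nn hqtR0) hT.le
      have he : b * cc
          = Lfx / lam2 * (expQuot (-R) T * ((lam1⁻¹*Lby + Lsy) * expQuotNeg (-R) T)) := by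
        rw [hbdef, hccdef]; ring
      rw [he]
      calc Lfx / lam2 * (expQuot (-R) T * ((lam1⁻¹*Lby + Lsy) * expQuotNeg (-R) T))
          ≤ Lfx / lam2 * (T * (K2m * Real.exp (R*T))) :=
            mul_le_mul_of_nonneg_left houter hK4nn
        _ ≤ 1/8 := hK4small
    have hF1le : a + b ≤ 2*Lgx + Lfx*T := by
      have h1 : a ≤ 2*Lgx := by
        rw [hadef]
        linarith only [mul_le_mul_of_nonneg_left heR1 (mul_nonneg hLgx (by norm_num : (0:ℝ) ≤ 2))]
      have h2 : b ≤ Lfx*T := by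
        rw [hbdef]; exact mul_le_mul hK4le hqRT hqR0 hLfx
      linarith only [h1, h2]
    have ht3 : (a + b) * d ≤ 1/8 := by
      have hco2 : 0 ≤ Real.exp (N*T) * ((m:ℝ)*lam3) * (2*(lam3⁻¹*Lfy+lam3)) * T :=
        mul_nonneg (mul_nonneg (mul_nonneg heN.le hC4nn) hC2nn) hT.le
      have hstep1 : d ≤ Real.exp (N*T) * (lam1⁻¹*Lbz) * ((m:ℝ)*lam3) * (2*(lam3⁻¹*Lfy+lam3)) * T := by
        rw [hddef]
        exact mul_le_mul_of_nonneg_left hqtKT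
          (mul_nonneg (mul_nonneg (mul_nonneg heN.le hC1nn) hC4nn) hC2nn)
      have hstep2 : Real.exp (N*T) * (lam1⁻¹*Lbz) * ((m:ℝ)*lam3) * (2*(lam3⁻¹*Lfy+lam3)) * T
          ≤ Real.exp (N*T) * (1/D) * ((m:ℝ)*lam3) * (2*(lam3⁻¹*Lfy+lam3)) * T := by
        linarith only [mul_le_mul_of_nonneg_left hC1le hco2]
      have hdle : d ≤ Real.exp (N*T) * (1/D) * ((m:ℝ)*lam3) * (2*(lam3⁻¹*Lfy+lam3)) * T :=
        le_trans hstep1 hstep2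
      have hprod : (a+b)*d
          ≤ (2*Lgx+Lfx*T) * (Real.exp (N*T) * (1/D) * ((m:ℝ)*lam3) * (2*(lam3⁻¹*Lfy+lam3)) * T) :=
        mul_le_mul hF1le hdle hd0 hF1mnn
      have heqX : (2*Lgx+Lfx*T) * (Real.exp (N*T) * (1/D) * ((m:ℝ)*lam3) * (2*(lam3⁻¹*Lfy+lam3)) * T)
          = (1/D)*X := by
        rw [hXdef]; ring
      rw [heqX] at hprod
      linarith only [hprod, hDX]
    have hsum : (a+b) * (cc+d) ≤ 3/8 := by
      have hring : (a+b)*(cc+d) = a*cc + b*cc + (a+b)*d := by ring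
      rw [hring]; linarith only [ht1, ht2, ht3]
    have hfinal : (a+b) * (1 - Bbar m T kb Lsx Lbz Lfx Lfz Lgx lam1 lam3 1)⁻¹ * (cc+d) ≤ 2 * (3/8) := by
      calc (a+b) * (1 - Bbar m T kb Lsx Lbz Lfx Lfz Lgx lam1 lam3 1)⁻¹ * (cc+d)
          ≤ (a+b) * 2 * (cc+d) := by
            apply mul_le_mul_of_nonneg_right
              (mul_le_mul_of_nonneg_left hInv2 (by linarith : (0:ℝ) ≤ a+b))
              (by linarith : (0:ℝ) ≤ cc+d)
        _ = 2*((a+b)*(cc+d)) := by ring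
        _ ≤ 2*(3/8) := by linarith only [hsum]
    linarith only [hfinal]
end

section
/- Fix an integer m ≥ 1, a time horizon T > 0, a real constant k^b, and nonnegative constants L^b_x, L^b_y, L^σ_x, L^σ_y, L^f_x, L^f_y, L^f_z, L^g_x. Then there exist c < 0 and ε > 0 such that for every real k^f ≤ c and every nonnegative L^b_z ≤ ε, there exist λ1 > 0, λ2 > L^f_z, λ3 > 2mL^f_z and λ4 > 0 for which the quantities B̄ and Ā (computed with these constants and parameters) satisfy max(B̄, Ā) < 1. -/
lemma expQuot_pos (c : ℝ) {T : ℝ} (hT : 0 < T) : 0 < expQuot c T := by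
  unfold expQuot
  split_ifs with h
  · exact hT
  · rcases lt_or_gt_of_ne h with hc | hc
    · apply div_pos_of_neg_of_neg _ hc
      have h1 : c * T < 0 := mul_neg_of_neg_of_pos hc hT
      have := Real.exp_lt_one_iff.mpr h1
      linarith
    · apply div_pos _ hc
      have h1 : 0 < c * T := mul_pos hc hT
      have := Real.one_lt_exp_iff.mpr h1
      linarith

lemma expQuotNeg_pos (c : ℝ) {T : ℝ} (hT : 0 < T) : 0 < expQuotNeg c T := by
  unfold expQuotNeg
  split_ifs with h
  · exact hT
  · rcases lt_or_gt_of_ne h with hc | hc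
    · apply div_pos_of_neg_of_neg _ hc
      have h1 : 0 < -(c * T) := by nlinarith
      have := Real.one_lt_exp_iff.mpr h1
      linarith
    · apply div_pos _ hc
      have h1 : -(c * T) < 0 := by nlinarith
      have := Real.exp_lt_one_iff.mpr h1
      linarith

lemma expQuot_eq_exp_mul (c T : ℝ) : expQuot c T = Real.exp (c * T) * expQuotNeg c T := by
  unfold expQuot expQuotNeg
  split_ifs with h
  · norm_num [h]
  · rw [Real.exp_neg]
    field_simp

lemma expQuot_le_of_neg {c : ℝ} (hc : c < 0) (T : ℝ) : expQuot c T ≤ (-c)⁻¹ := by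
  rw [expQuot, if_neg hc.ne]
  rw [div_le_iff_of_neg hc]
  have h1 : (-c)⁻¹ * c = -1 := by
    field_simp
    rw [div_self hc.ne]
  have := Real.exp_pos (c * T)
  linarith


lemma aux_half (x D : ℝ) (hD : 0 ≤ D) (hx : x ≤ (2 * (D + 1))⁻¹) (hx0 : 0 ≤ x) :
    x * D ≤ 1 / 2 := by
  have hpos : (0:ℝ) < 2 * (D + 1) := by linarith
  have h1 : x * D ≤ (2 * (D + 1))⁻¹ * D := mul_le_mul_of_nonneg_right hx hD
  have h2 : (2 * (D + 1))⁻¹ * D ≤ 1 / 2 := by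
    rw [inv_mul_le_iff₀ hpos]
    linarith
  linarith

lemma aux_inv_le_two (b : ℝ) (h : 1 / 2 ≤ b) : b⁻¹ ≤ 2 := by
  have h1 : (0:ℝ) < 1/2 := by norm_num
  have := inv_anti₀ h1 h
  norm_num at this
  linarith

lemma aux1 (u q : ℝ) (hu : 0 ≤ u) (hq0 : 0 ≤ q) (hq : q ≤ (32 * u + 1)⁻¹) :
    2 * u * q ≤ 1 / 16 := by
  have hpos : (0:ℝ) < 32 * u + 1 := by linarith
  have hkey := mul_inv_cancel₀ hpos.ne'
  have h3 : 0 ≤ (32 * u + 1)⁻¹ := inv_nonneg.mpr hpos.le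
  nlinarith [mul_nonneg hu (sub_nonneg.mpr hq)]

lemma aux2 (w x z : ℝ) (hw : 0 ≤ w) (hx0 : 0 ≤ x) (hxz : x ≤ z)
    (hz : z ≤ (16 * (w + 1))⁻¹) : w * x ≤ 1 / 16 := by
  have hpos : (0:ℝ) < 16 * (w + 1) := by linarith
  have hkey := mul_inv_cancel₀ hpos.ne'
  have h4 : 0 ≤ (16 * (w + 1))⁻¹ := inv_nonneg.mpr hpos.le
  nlinarith [mul_nonneg hw (sub_nonneg.mpr (le_trans hxz hz))]

/-- Monotonicity in `f`: if `k^f` is sufficiently negative and `L^b_z` sufficiently small,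
then suitable parameters `λ₁, λ₂, λ₃, λ₄` yield `max(B̄, Ā) < 1`. -/
theorem monotonicity_in_f
    (m : ℕ) (hm : 1 ≤ m) (T : ℝ) (hT : 0 < T) (kb : ℝ)
    (Lbx Lby Lsx Lsy Lfx Lfy Lfz Lgx : ℝ)
    (hLbx : 0 ≤ Lbx) (hLby : 0 ≤ Lby) (hLsx : 0 ≤ Lsx) (hLsy : 0 ≤ Lsy)
    (hLfx : 0 ≤ Lfx) (hLfy : 0 ≤ Lfy) (hLfz : 0 ≤ Lfz) (hLgx : 0 ≤ Lgx) :
    ∃ c < (0 : ℝ), ∃ ε > (0 : ℝ), ∀ kf : ℝ, kf ≤ c → ∀ Lbz : ℝ, 0 ≤ Lbz → Lbz ≤ ε →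
      ∃ lam1 > (0 : ℝ), ∃ lam2 > Lfz, ∃ lam3 > 2 * (m : ℝ) * Lfz, ∃ lam4 > (0 : ℝ),
        max (Bbar m T kb Lsx Lbz Lfx Lfz Lgx lam1 lam3 lam4)
            (Abar m T kb kf Lby Lbz Lsx Lsy Lfx Lfy Lfz Lgx lam1 lam2 lam3 lam4) < 1 := by
  have hm' : (1 : ℝ) ≤ (m : ℝ) := by exact_mod_cast hm
  set K1 : ℝ := 2 * kb + 1 + Lsx with hK1def
  set E : ℝ := Real.exp (max (-(K1 * T)) 0) with hEdef
  have hE : 0 < E := Real.exp_pos _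
  set lam3 : ℝ := 2 * (m : ℝ) * Lfz + 2 with hlam3def
  have h2m : (0 : ℝ) ≤ 2 * (m : ℝ) * Lfz :=
    mul_nonneg (by positivity) hLfz
  have hlam3 : lam3 > 2 * (m : ℝ) * Lfz := by rw [hlam3def]; linarith
  have hlam3pos : 0 < lam3 := by linarith
  have hlam3inv : 0 < lam3⁻¹ := inv_pos.mpr hlam3pos
  set C4 : ℝ := (m : ℝ) / (1 - 2 * (m : ℝ) * Lfz * lam3⁻¹) with hC4def
  have hden : 1 - 2 * (m : ℝ) * Lfz * lam3⁻¹ = 2 * lam3⁻¹ := by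
    have hne : lam3 ≠ 0 := hlam3pos.ne'
    field_simp
    rw [hlam3def]
    ring
  have hC4 : 0 < C4 := by
    rw [hC4def, hden]
    exact div_pos (by linarith) (by linarith)
  set C3 : ℝ := 2 * lam3⁻¹ with hC3def
  have hC3 : 0 < C3 := by rw [hC3def]; linarith
  set C2 : ℝ := 2 * (lam3⁻¹ * Lfy + lam3) with hC2def
  have hC2 : 0 ≤ C2 := by
    rw [hC2def]
    have : 0 ≤ lam3⁻¹ * Lfy := mul_nonneg hlam3inv.le hLfy
    linarith
  set K2 : ℝ := Lby + Lsy with hK2def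
  have hK2 : 0 ≤ K2 := by rw [hK2def]; linarith
  set D : ℝ := E * C4 * (Lfx * C3 * expQuot K1 T + 2 * Lgx * Real.exp (K1 * T)) with hDdef
  have hD : 0 ≤ D := by
    rw [hDdef]
    have h1 := expQuot_pos K1 hT
    have h2 := Real.exp_pos (K1 * T)
    apply mul_nonneg (mul_nonneg hE.le hC4.le)
    exact add_nonneg (mul_nonneg (mul_nonneg hLfx hC3.le) h1.le)
      (mul_nonneg (by linarith) h2.le)
  set μ : ℝ := -(32 * Lgx * K2 + 1) with hμdef
  have hLgxK2 : 0 ≤ Lgx * K2 := mul_nonneg hLgx hK2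
  have hμneg : μ < 0 := by rw [hμdef]; linarith
  set q : ℝ := expQuot μ T with hqdef
  set r : ℝ := expQuotNeg μ T with hrdef
  set s : ℝ := expQuotNeg (μ - K1) T with hsdef
  have hq : 0 < q := by rw [hqdef]; exact expQuot_pos μ hT
  have hr : 0 < r := by rw [hrdef]; exact expQuotNeg_pos μ hT
  have hs : 0 < s := by rw [hsdef]; exact expQuotNeg_pos _ hT
  have hqr : q = Real.exp (μ * T) * r := by
    rw [hqdef, hrdef]; exact expQuot_eq_exp_mul μ T
  have hnegμ : -μ = 32 * (Lgx * K2) + 1 := by rw [hμdef]; ring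
  have hq_le : q ≤ (32 * (Lgx * K2) + 1)⁻¹ := by
    rw [hqdef, ← hnegμ]; exact expQuot_le_of_neg hμneg T
  set P : ℝ := 2 * Lgx * Real.exp (μ * T) with hPdef
  have hP : 0 ≤ P := by
    rw [hPdef]
    exact mul_nonneg (by linarith) (Real.exp_pos _).le
  set G : ℝ := E * C4 * C2 * s with hGdef
  have hG : 0 ≤ G := by
    rw [hGdef]
    exact mul_nonneg (mul_nonneg (mul_nonneg hE.le hC4.le) hC2) hs.le
  have hPG : 0 ≤ P * G := mul_nonneg hP hG
  set ε : ℝ := min ((2 * (D + 1))⁻¹) ((16 * (P * G + 1))⁻¹) with hεdef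
  have hε0 : 0 < ε := by
    rw [hεdef]
    exact lt_min (inv_pos.mpr (by linarith)) (inv_pos.mpr (by linarith))
  set Q : ℝ := q * (K2 * r + ε * G) with hQdef
  have hQ : 0 ≤ Q := by
    rw [hQdef]
    exact mul_nonneg hq.le (add_nonneg (mul_nonneg hK2 hr.le) (mul_nonneg hε0.le hG))
  have hLfxQ : 0 ≤ Lfx * Q := mul_nonneg hLfx hQ
  set c : ℝ := min (-1) ((μ - K1 - Lfz - 16 * (Lfx * Q) - 1) / 2) with hcdef
  clear_value K1 E lam3 C4 C3 C2 K2 D μ q r s P G ε Q c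
  have hc0 : c < 0 := by
    calc c ≤ -1 := by rw [hcdef]; exact min_le_left _ _
    _ < 0 := by norm_num
  refine ⟨c, hc0, ε, hε0, ?_⟩
  intro kf hkf Lbz hLbz0 hLbz
  set lam2 : ℝ := -2 * kf + μ - K1 with hlam2def
  clear_value lam2
  have hc2 : c ≤ (μ - K1 - Lfz - 16 * (Lfx * Q) - 1) / 2 := by
    rw [hcdef]; exact min_le_right _ _
  have hlam2lb : Lfz + 16 * (Lfx * Q) + 1 ≤ lam2 := by rw [hlam2def]; linarith
  have hlam2Lfz : lam2 > Lfz := by linarith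
  have hlam2pos : 0 < lam2 := by linarith
  refine ⟨1, one_pos, lam2, hlam2Lfz, lam3, hlam3, 1, one_pos, ?_⟩
  have hεD : ε ≤ (2 * (D + 1))⁻¹ := by rw [hεdef]; exact min_le_left _ _
  have hεPG : ε ≤ (16 * (P * G + 1))⁻¹ := by rw [hεdef]; exact min_le_right _ _
  have hBeq : Bbar m T kb Lsx Lbz Lfx Lfz Lgx 1 lam3 1 = Lbz * D := by
    rw [hDdef, hEdef, hC4def, hC3def, hK1def]
    simp only [Bbar]
    ring
  have hBle : Lbz * D ≤ 1 / 2 := aux_half Lbz D hD (le_trans hLbz hεD) hLbz0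
  have hBnn : 0 ≤ Lbz * D := mul_nonneg hLbz0 hD
  have hIpos : 0 < (1 - Lbz * D)⁻¹ := inv_pos.mpr (by linarith)
  have hIle : (1 - Lbz * D)⁻¹ ≤ 2 := aux_inv_le_two _ (by linarith)
  have e1 : 2 * kb + 1 + Lsx + (2 * kf + lam2) = μ := by rw [hlam2def, hK1def]; ring
  have e2 : 2 * kf + lam2 = μ - K1 := by rw [hlam2def]; ring
  have hAeq : Abar m T kb kf Lby Lbz Lsx Lsy Lfx Lfy Lfz Lgx 1 lam2 lam3 1
      = (P + (Lfx / lam2) * q) * (1 - Lbz * D)⁻¹ * (K2 * r + Lbz * G) := by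
    simp only [Abar]
    rw [hBeq, e1, e2]
    rw [hPdef, hK2def, hGdef, hqdef, hrdef, hsdef, hEdef, hC4def, hC2def, hK1def]
    ring
  rw [max_lt_iff]
  constructor
  · rw [hBeq]; linarith
  · rw [hAeq]
    clear hAeq hBeq e1 e2
    have hK4 : 0 ≤ Lfx / lam2 := div_nonneg hLfx hlam2pos.le
    have hF1 : 0 ≤ P + (Lfx / lam2) * q := add_nonneg hP (mul_nonneg hK4 hq.le)
    have hF3 : 0 ≤ K2 * r + Lbz * G :=
      add_nonneg (mul_nonneg hK2 hr.le) (mul_nonneg hLbz0 hG)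
    have hF1F3 : 0 ≤ (P + (Lfx / lam2) * q) * (K2 * r + Lbz * G) := mul_nonneg hF1 hF3
    have hstep1 : (P + (Lfx / lam2) * q) * (1 - Lbz * D)⁻¹ * (K2 * r + Lbz * G)
        ≤ 2 * ((P + (Lfx / lam2) * q) * (K2 * r + Lbz * G)) := by
      calc (P + (Lfx / lam2) * q) * (1 - Lbz * D)⁻¹ * (K2 * r + Lbz * G)
          = ((P + (Lfx / lam2) * q) * (K2 * r + Lbz * G)) * (1 - Lbz * D)⁻¹ := by ring
        _ ≤ ((P + (Lfx / lam2) * q) * (K2 * r + Lbz * G)) * 2 :=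
            mul_le_mul_of_nonneg_left hIle hF1F3
        _ = 2 * ((P + (Lfx / lam2) * q) * (K2 * r + Lbz * G)) := by ring
    have ha0 : P * (K2 * r) = 2 * (Lgx * K2) * q := by rw [hPdef, hqr]; ring
    have ha : P * (K2 * r) ≤ 1 / 16 := by
      rw [ha0]; exact aux1 (Lgx * K2) q hLgxK2 hq.le hq_le
    have hb : P * (Lbz * G) ≤ 1 / 16 := by
      have h1 : P * (Lbz * G) = (P * G) * Lbz := by ring
      rw [h1]; exact aux2 (P * G) Lbz ε hPG hLbz0 hLbz hεPG
    have hc1 : q * (K2 * r + Lbz * G) ≤ Q := by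
      rw [hQdef]
      have h0 : K2 * r + Lbz * G ≤ K2 * r + ε * G := by
        have := mul_le_mul_of_nonneg_right hLbz hG
        linarith
      exact mul_le_mul_of_nonneg_left h0 hq.le
    have hc2' : (Lfx / lam2) * (q * (K2 * r + Lbz * G)) ≤ (Lfx / lam2) * Q :=
      mul_le_mul_of_nonneg_left hc1 hK4
    have hc3 : (Lfx / lam2) * Q ≤ 1 / 16 := by
      rw [div_mul_eq_mul_div, div_le_iff₀ hlam2pos]
      linarith
    have hexpand : (P + (Lfx / lam2) * q) * (K2 * r + Lbz * G)
        = P * (K2 * r) + P * (Lbz * G) + (Lfx / lam2) * (q * (K2 * r + Lbz * G)) := by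
      ring
    have hfinal : (P + (Lfx / lam2) * q) * (K2 * r + Lbz * G) ≤ 3 / 16 := by
      rw [hexpand]; linarith
    linarith
end

section
/- Fix an integer m ≥ 1, a time horizon T > 0, a real constant k^b, and nonnegative constants L^b_z, L^σ_x, L^f_x, L^f_y, L^f_z, L^g_x. Define B̄_ℓ := inf{ B̄(λ1, λ3, λ4) : λ1 > 0, λ3 > 2mL^f_z, λ4 > 0 }. If max(−2k^b − L^σ_x, 0) ≤ 1/T, then B̄_ℓ = m·L^b_z·L^g_x·T·e^{(2k^b + L^σ_x + 1/T)·T}. -/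
lemma expQuot_nonneg (c : ℝ) {T : ℝ} (hT : 0 ≤ T) : 0 ≤ expQuot c T := by
  unfold expQuot
  split_ifs with h
  · exact hT
  · rcases lt_or_gt_of_ne h with hc | hc
    · have h1 : Real.exp (c * T) ≤ 1 := by
        rw [show (1:ℝ) = Real.exp 0 by simp]
        exact Real.exp_le_exp.2 (mul_nonpos_of_nonpos_of_nonneg hc.le hT)
      exact div_nonneg_of_nonpos (by linarith) hc.le
    · have h1 : 1 ≤ Real.exp (c * T) := Real.one_le_exp (mul_nonneg hc.le hT)
      exact div_nonneg (by linarith) hc.le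

lemma key {T : ℝ} (hT : 0 < T) {a lam1 : ℝ} (ha : 0 ≤ a + 1 / T) (hl : 0 < lam1) :
    lam1 * (T * Real.exp ((a + 1 / T) * T)) ≤ Real.exp (max ((a + lam1) * T) 0) := by
  rcases le_or_gt 0 ((a + lam1) * T) with h | h
  · rw [max_eq_left h]
    have e1 : Real.exp ((a + lam1) * T)
        = Real.exp ((a + 1 / T) * T) * Real.exp ((lam1 - 1 / T) * T) := by
      rw [← Real.exp_add]; ring_nf
    have h3 : (lam1 - 1 / T) * T = lam1 * T - 1 := by field_simp
    have e2 : lam1 * T ≤ Real.exp ((lam1 - 1 / T) * T) := by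
      rw [h3]
      have := Real.add_one_le_exp (lam1 * T - 1)
      linarith
    rw [e1]
    have hexp : (0:ℝ) < Real.exp ((a + 1 / T) * T) := Real.exp_pos _
    calc lam1 * (T * Real.exp ((a + 1 / T) * T))
        = Real.exp ((a + 1 / T) * T) * (lam1 * T) := by ring
      _ ≤ Real.exp ((a + 1 / T) * T) * Real.exp ((lam1 - 1 / T) * T) :=
          mul_le_mul_of_nonneg_left e2 hexp.le
  · rw [max_eq_right h.le, Real.exp_zero]
    have hal : a + lam1 < 0 := by
      by_contra hc; push_neg at hc; nlinarith
    set s := (a + 1 / T) * T with hs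
    have hs1 : s = a * T + 1 := by rw [hs]; field_simp
    have hlt : lam1 * T < 1 - s := by nlinarith
    have hs0 : 0 ≤ s := mul_nonneg ha hT.le
    have h2 : 1 - s ≤ Real.exp (-s) := by
      have := Real.add_one_le_exp (-s); linarith
    have hexp : (0:ℝ) < Real.exp s := Real.exp_pos _
    calc lam1 * (T * Real.exp s) = (lam1 * T) * Real.exp s := by ring
      _ ≤ (1 - s) * Real.exp s := mul_le_mul_of_nonneg_right hlt.le hexp.le
      _ ≤ Real.exp (-s) * Real.exp s := mul_le_mul_of_nonneg_right h2 hexp.le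
      _ = 1 := by rw [← Real.exp_add]; simp

lemma Bbar_lower (m : ℕ) (hm : 1 ≤ m) {T : ℝ} (hT : 0 < T) (kb Lbz Lsx Lfx Lfz Lgx : ℝ)
    (hLbz : 0 ≤ Lbz) (hLfx : 0 ≤ Lfx) (hLfz : 0 ≤ Lfz) (hLgx : 0 ≤ Lgx)
    (hreg : max (-2 * kb - Lsx) 0 ≤ 1 / T)
    {lam1 lam3 lam4 : ℝ} (h1 : 0 < lam1) (h3 : 2 * (m : ℝ) * Lfz < lam3) (h4 : 0 < lam4) :
    (m : ℝ) * Lbz * Lgx * T * Real.exp ((2 * kb + Lsx + 1 / T) * T)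
      ≤ Bbar m T kb Lsx Lbz Lfx Lfz Lgx lam1 lam3 lam4 := by
  have hm0 : (0:ℝ) < (m:ℝ) := by exact_mod_cast hm
  have h3pos : 0 < lam3 := lt_of_le_of_lt (by positivity) h3
  have hd : 0 < 1 - 2 * (m : ℝ) * Lfz * lam3⁻¹ := by
    have h := (div_lt_one h3pos).mpr h3
    rw [div_eq_mul_inv] at h
    linarith
  have hd1 : 1 - 2 * (m : ℝ) * Lfz * lam3⁻¹ ≤ 1 := by
    have : 0 ≤ 2 * (m : ℝ) * Lfz * lam3⁻¹ := by positivity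
    linarith
  have hC4 : (m : ℝ) ≤ (m : ℝ) / (1 - 2 * (m : ℝ) * Lfz * lam3⁻¹) := by
    rw [le_div_iff₀ hd]; nlinarith
  have hC4pos : 0 < (m : ℝ) / (1 - 2 * (m : ℝ) * Lfz * lam3⁻¹) := by positivity
  have ha : 0 ≤ (2 * kb + Lsx) + 1 / T := by
    have := le_trans (le_max_left (-2 * kb - Lsx) 0) hreg
    linarith
  have hkey := key hT ha h1 (a := 2 * kb + Lsx)
  rw [show ((2 * kb + Lsx) + lam1) * T = (2 * kb + lam1 + Lsx) * T by ring] at hkey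
  simp only [Bbar]
  set K1 : ℝ := 2 * kb + lam1 + Lsx with hK1
  set C4 : ℝ := (m : ℝ) / (1 - 2 * (m : ℝ) * Lfz * lam3⁻¹) with hC4def
  have hQ : 0 ≤ expQuot K1 T := expQuot_nonneg _ hT.le
  have hterm1 : 0 ≤ Real.exp (max (-(K1 * T)) 0) * Lfx * (lam1⁻¹ * Lbz) * C4
      * (2 * lam3⁻¹) * expQuot K1 T := by
    apply mul_nonneg _ hQ
    apply mul_nonneg _ (by positivity)
    apply mul_nonneg _ hC4pos.le
    positivity
  have hE : Real.exp (max (-(K1 * T)) 0) * Real.exp (K1 * T) = Real.exp (max (K1 * T) 0) := by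
    rw [← Real.exp_add]
    congr 1
    rcases le_total (K1 * T) 0 with h | h
    · rw [max_eq_left (by linarith), max_eq_right h]; ring
    · rw [max_eq_right (by linarith), max_eq_left h]; ring
  have hterm2 : (m : ℝ) * Lbz * Lgx * T * Real.exp ((2 * kb + Lsx + 1 / T) * T)
      ≤ Real.exp (max (-(K1 * T)) 0) * (lam1⁻¹ * Lbz) * C4 * Lgx * (1 + lam4)
        * Real.exp (K1 * T) := by
    have hrw : Real.exp (max (-(K1 * T)) 0) * (lam1⁻¹ * Lbz) * C4 * Lgx * (1 + lam4)
        * Real.exp (K1 * T)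
        = (lam1⁻¹ * Lbz) * C4 * Lgx * (1 + lam4) * Real.exp (max (K1 * T) 0) := by
      rw [← hE]; ring
    rw [hrw]
    have hargs : ((2 * kb + Lsx) + 1 / T) * T = (2 * kb + Lsx + 1 / T) * T := by ring
    rw [← hargs]
    calc (m : ℝ) * Lbz * Lgx * T * Real.exp (((2 * kb + Lsx) + 1 / T) * T)
        = (lam1⁻¹ * Lbz) * (m : ℝ) * Lgx * 1
            * (lam1 * (T * Real.exp (((2 * kb + Lsx) + 1 / T) * T))) := by
          field_simp
      _ ≤ (lam1⁻¹ * Lbz) * C4 * Lgx * (1 + lam4) * Real.exp (max (K1 * T) 0) := by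
          gcongr
          all_goals linarith

  linarith

lemma Bbar_at (m : ℕ) (T kb Lsx Lbz Lfx Lfz Lgx lam3 lam4 : ℝ) (hT : 0 < T)
    (hA : 0 ≤ (2 * kb + 1 / T + Lsx) * T) :
    Bbar m T kb Lsx Lbz Lfx Lfz Lgx (1 / T) lam3 lam4 =
      Lfx * (T * Lbz) * ((m : ℝ) / (1 - 2 * (m : ℝ) * Lfz * lam3⁻¹)) * (2 * lam3⁻¹)
          * expQuot (2 * kb + 1 / T + Lsx) T
        + T * Lbz * ((m : ℝ) / (1 - 2 * (m : ℝ) * Lfz * lam3⁻¹)) * Lgx * (1 + lam4)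
          * Real.exp ((2 * kb + 1 / T + Lsx) * T) := by
  simp only [Bbar]
  rw [max_eq_right (by linarith : -((2 * kb + 1 / T + Lsx) * T) ≤ 0), Real.exp_zero,
    one_div, inv_inv]
  ring

/-- Infimum of `B̄` over the admissible parameters, first regime:
if `max(−2k^b − L^σ_x, 0) ≤ 1/T` then the infimum equals
`m·L^b_z·L^g_x·T·e^{(2k^b + L^σ_x + 1/T)·T}`. -/
theorem Bbar_inf_first_regime
    (m : ℕ) (hm : 1 ≤ m) (T : ℝ) (hT : 0 < T) (kb : ℝ)
    (Lbz Lsx Lfx Lfy Lfz Lgx : ℝ)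
    (hLbz : 0 ≤ Lbz) (hLsx : 0 ≤ Lsx) (hLfx : 0 ≤ Lfx) (hLfy : 0 ≤ Lfy)
    (hLfz : 0 ≤ Lfz) (hLgx : 0 ≤ Lgx)
    (hreg : max (-2 * kb - Lsx) 0 ≤ 1 / T) :
    sInf {x : ℝ | ∃ lam1 > (0 : ℝ), ∃ lam3 > 2 * (m : ℝ) * Lfz, ∃ lam4 > (0 : ℝ),
        x = Bbar m T kb Lsx Lbz Lfx Lfz Lgx lam1 lam3 lam4}
      = (m : ℝ) * Lbz * Lgx * T * Real.exp ((2 * kb + Lsx + 1 / T) * T) := by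
  set S : Set ℝ := {x : ℝ | ∃ lam1 > (0 : ℝ), ∃ lam3 > 2 * (m : ℝ) * Lfz, ∃ lam4 > (0 : ℝ),
      x = Bbar m T kb Lsx Lbz Lfx Lfz Lgx lam1 lam3 lam4} with hS
  set v : ℝ := (m : ℝ) * Lbz * Lgx * T * Real.exp ((2 * kb + Lsx + 1 / T) * T) with hv
  have hm0 : (0:ℝ) < (m:ℝ) := by exact_mod_cast hm
  have hlow : ∀ x ∈ S, v ≤ x := by
    rintro x ⟨l1, h1, l3, h3, l4, h4, rfl⟩
    exact Bbar_lower m hm hT kb Lbz Lsx Lfx Lfz Lgx hLbz hLfx hLfz hLgx hreg h1 h3 h4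
  have hbdd : BddBelow S := ⟨v, hlow⟩
  have hne : S.Nonempty := by
    refine ⟨_, 1, one_pos, 2 * (m : ℝ) * Lfz + 1, by linarith, 1, one_pos, rfl⟩
  have hA0 : 0 ≤ 2 * kb + 1 / T + Lsx := by
    have := le_trans (le_max_left (-2 * kb - Lsx) 0) hreg
    linarith
  have hAT : 0 ≤ (2 * kb + 1 / T + Lsx) * T := mul_nonneg hA0 hT.le
  refine le_antisymm ?_ (le_csInf hne hlow)
  -- upper bound via a sequence
  set f : ℕ → ℝ := fun n =>
    Bbar m T kb Lsx Lbz Lfx Lfz Lgx (1 / T) (2 * (m : ℝ) * Lfz + ((n : ℝ) + 1))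
      (((n : ℝ) + 1)⁻¹) with hf
  have hmem : ∀ n, f n ∈ S := by
    intro n
    refine ⟨1 / T, by positivity, 2 * (m : ℝ) * Lfz + ((n : ℝ) + 1), ?_,
      ((n : ℝ) + 1)⁻¹, by positivity, rfl⟩
    have : (0:ℝ) ≤ (n : ℝ) := Nat.cast_nonneg n
    linarith
  have hl3top : Filter.Tendsto (fun n : ℕ => 2 * (m : ℝ) * Lfz + ((n : ℝ) + 1))
      Filter.atTop Filter.atTop := by
    apply Filter.tendsto_atTop_add_const_left
    exact Filter.tendsto_atTop_add_const_right _ _ tendsto_natCast_atTop_atTop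
  have hu : Filter.Tendsto (fun n : ℕ => (2 * (m : ℝ) * Lfz + ((n : ℝ) + 1))⁻¹)
      Filter.atTop (nhds 0) := hl3top.inv_tendsto_atTop
  have hw : Filter.Tendsto (fun n : ℕ => ((n : ℝ) + 1)⁻¹) Filter.atTop (nhds 0) :=
    Filter.Tendsto.inv_tendsto_atTop
      (Filter.tendsto_atTop_add_const_right _ _ tendsto_natCast_atTop_atTop)
  have hden : Filter.Tendsto
      (fun n : ℕ => 1 - 2 * (m : ℝ) * Lfz * (2 * (m : ℝ) * Lfz + ((n : ℝ) + 1))⁻¹)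
      Filter.atTop (nhds 1) := by
    have := Filter.Tendsto.sub (tendsto_const_nhds (x := (1:ℝ)))
      (hu.const_mul (2 * (m : ℝ) * Lfz))
    simpa using this
  have hC4 : Filter.Tendsto
      (fun n : ℕ => (m : ℝ) / (1 - 2 * (m : ℝ) * Lfz * (2 * (m : ℝ) * Lfz + ((n : ℝ) + 1))⁻¹))
      Filter.atTop (nhds (m : ℝ)) := by
    have := Filter.Tendsto.div (tendsto_const_nhds (x := (m:ℝ))) hden one_ne_zero
    rw [div_one] at this; exact this
  have hft : Filter.Tendsto f Filter.atTop (nhds v) := by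
    have heq : f = fun n : ℕ =>
        Lfx * (T * Lbz) * ((m : ℝ) / (1 - 2 * (m : ℝ) * Lfz
            * (2 * (m : ℝ) * Lfz + ((n : ℝ) + 1))⁻¹))
          * (2 * (2 * (m : ℝ) * Lfz + ((n : ℝ) + 1))⁻¹)
          * expQuot (2 * kb + 1 / T + Lsx) T
        + T * Lbz * ((m : ℝ) / (1 - 2 * (m : ℝ) * Lfz
            * (2 * (m : ℝ) * Lfz + ((n : ℝ) + 1))⁻¹))
          * Lgx * (1 + ((n : ℝ) + 1)⁻¹)
          * Real.exp ((2 * kb + 1 / T + Lsx) * T) := by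
      funext n
      exact Bbar_at m T kb Lsx Lbz Lfx Lfz Lgx _ _ hT hAT
    rw [heq]
    have hlim : Filter.Tendsto (fun n : ℕ =>
        Lfx * (T * Lbz) * ((m : ℝ) / (1 - 2 * (m : ℝ) * Lfz
            * (2 * (m : ℝ) * Lfz + ((n : ℝ) + 1))⁻¹))
          * (2 * (2 * (m : ℝ) * Lfz + ((n : ℝ) + 1))⁻¹)
          * expQuot (2 * kb + 1 / T + Lsx) T
        + T * Lbz * ((m : ℝ) / (1 - 2 * (m : ℝ) * Lfz
            * (2 * (m : ℝ) * Lfz + ((n : ℝ) + 1))⁻¹))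
          * Lgx * (1 + ((n : ℝ) + 1)⁻¹)
          * Real.exp ((2 * kb + 1 / T + Lsx) * T)) Filter.atTop
        (nhds (Lfx * (T * Lbz) * (m : ℝ) * (2 * 0) * expQuot (2 * kb + 1 / T + Lsx) T
          + T * Lbz * (m : ℝ) * Lgx * (1 + 0) * Real.exp ((2 * kb + 1 / T + Lsx) * T))) := by
      refine Filter.Tendsto.add ?_ ?_
      · exact (((tendsto_const_nhds.mul hC4).mul (hu.const_mul 2)).mul tendsto_const_nhds)
      · exact ((((tendsto_const_nhds.mul hC4).mul tendsto_const_nhds).mul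
          (tendsto_const_nhds.add hw)).mul tendsto_const_nhds)
    have hval : Lfx * (T * Lbz) * (m : ℝ) * (2 * 0) * expQuot (2 * kb + 1 / T + Lsx) T
        + T * Lbz * (m : ℝ) * Lgx * (1 + 0) * Real.exp ((2 * kb + 1 / T + Lsx) * T) = v := by
      rw [hv, show (2 * kb + Lsx + 1 / T) = (2 * kb + 1 / T + Lsx) by ring]
      ring
    rwa [hval] at hlim
  exact ge_of_tendsto' hft fun n => csInf_le hbdd (hmem n)
end
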